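/- arXiv:2306.00542 — 7 statements merged into one kernel-verified Lean document; each statement's English description precedes it below -/
import Mathlib

section
/- Let f : ℝ × ℝⁿ → ℝ be differentiable, and let p_A and p_C be probability densities on ℝ (differentiable measures). Suppose for every b ∈ ℝⁿ the map a ↦ f(a, b) pushes forward the measure with density p_A to the measure with density p_C. Then f(·, b) is constant in b, i.e., f(a, b) = f(a, b') for all a ∈ ℝ and b, b' ∈ ℝⁿ. -/
open MeasureTheory

noncomputable section

/-- Lower bound for a density measure on a compact interval. -/
lemma dens_meas_lower (p : ℝ → ℝ) (hp : Continuous p) (hpos : ∀ x, 0 < p x)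
    (x y : ℝ) (hxy : x ≤ y) :
    ∃ c > 0, ENNReal.ofReal (c * (y - x)) ≤
      (volume.withDensity fun a => ENNReal.ofReal (p a)) (Set.Icc x y) := by
  obtain ⟨z, hz, hmin⟩ := isCompact_Icc.exists_isMinOn (Set.nonempty_Icc.2 hxy)
    hp.continuousOn
  refine ⟨p z, hpos z, ?_⟩
  rw [withDensity_apply _ measurableSet_Icc]
  calc ENNReal.ofReal (p z * (y - x)) = ENNReal.ofReal (p z) * volume (Set.Icc x y) := by
        rw [Real.volume_Icc, ENNReal.ofReal_mul (hpos z).le]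
    _ = ∫⁻ _ in Set.Icc x y, ENNReal.ofReal (p z) := (setLIntegral_const _ _).symm
    _ ≤ ∫⁻ a in Set.Icc x y, ENNReal.ofReal (p a) := by
        refine setLIntegral_mono (ENNReal.measurable_ofReal.comp hp.measurable) ?_
        intro a ha
        exact ENNReal.ofReal_le_ofReal (hmin ha)

/-- the density measure of `Ioc x y` is positive when `x < y`. -/
lemma dens_meas_Ioc_pos (p : ℝ → ℝ) (hp : Continuous p) (hpos : ∀ x, 0 < p x)
    (x y : ℝ) (hxy : x < y) :
    0 < (volume.withDensity fun a => ENNReal.ofReal (p a)) (Set.Ioc x y) := by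
  obtain ⟨z, hz, hmin⟩ := isCompact_Icc.exists_isMinOn (Set.nonempty_Icc.2 hxy.le)
    hp.continuousOn
  have h1 : ENNReal.ofReal (p z) * volume (Set.Ioc x y) ≤
      (volume.withDensity fun a => ENNReal.ofReal (p a)) (Set.Ioc x y) := by
    rw [withDensity_apply _ measurableSet_Ioc]
    calc ENNReal.ofReal (p z) * volume (Set.Ioc x y)
        = ∫⁻ _ in Set.Ioc x y, ENNReal.ofReal (p z) := (setLIntegral_const _ _).symm
      _ ≤ ∫⁻ a in Set.Ioc x y, ENNReal.ofReal (p a) := by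
          refine setLIntegral_mono (ENNReal.measurable_ofReal.comp hp.measurable) ?_
          intro a ha
          exact ENNReal.ofReal_le_ofReal (hmin (Set.Ioc_subset_Icc_self ha))
  refine lt_of_lt_of_le ?_ h1
  rw [Real.volume_Ioc]
  exact ENNReal.mul_pos (ENNReal.ofReal_pos.2 (hpos z)).ne'
    (ENNReal.ofReal_pos.2 (sub_pos.2 hxy)).ne'

/-- Key analytic lemma: a differentiable map pushing one fully supported continuous
density measure to another has nowhere vanishing derivative. -/
lemma deriv_ne_zero_of_measure_preserving
    (g : ℝ → ℝ) (hg : Differentiable ℝ g)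
    (pA pC : ℝ → ℝ) (hpA : Continuous pA) (hpC : Continuous pC)
    (hpApos : ∀ a, 0 < pA a) (hpCpos : ∀ c, 0 < pC c)
    (hpush : Measure.map g (volume.withDensity fun a => ENNReal.ofReal (pA a))
        = volume.withDensity fun c => ENNReal.ofReal (pC c))
    (a₀ : ℝ) : deriv g a₀ ≠ 0 := by
  intro h0
  set μA := volume.withDensity fun a => ENNReal.ofReal (pA a) with hμA
  set μC := volume.withDensity fun c => ENNReal.ofReal (pC c) with hμC
  set m := g a₀ with hm
  -- lower bound for pA near a₀
  obtain ⟨zA, hzA, hminA⟩ := isCompact_Icc.exists_isMinOn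
    (Set.nonempty_Icc.2 (by linarith : a₀ - 1 ≤ a₀ + 1)) hpA.continuousOn
  set c := pA zA with hc
  have hcpos : 0 < c := hpApos zA
  -- upper bound for pC near m
  obtain ⟨zC, hzC, hmaxC⟩ := isCompact_Icc.exists_isMaxOn
    (Set.nonempty_Icc.2 (by linarith : m - 1 ≤ m + 1)) hpC.continuousOn
  set C : ℝ := max (pC zC) 1 with hC
  have hCone : (1:ℝ) ≤ C := le_max_right _ _
  have hCpos : (0:ℝ) < C := lt_of_lt_of_le one_pos hCone
  set ε : ℝ := min (c / (2 * C)) 1 with hε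
  have hεpos : 0 < ε := lt_min (by positivity) one_pos
  have hεone : ε ≤ 1 := min_le_right _ _
  have hεle : ε ≤ c / (2 * C) := min_le_left _ _
  -- derivative zero: little-o estimate
  have hder : HasDerivAt g 0 a₀ := h0 ▸ (hg a₀).hasDerivAt
  have hlo := (hasDerivAt_iff_isLittleO.mp hder).def hεpos
  rw [Metric.eventually_nhds_iff] at hlo
  obtain ⟨δ₀, hδ₀pos, hδ₀⟩ := hlo
  set r : ℝ := min (δ₀ / 2) 1 with hr
  have hrpos : 0 < r := lt_min (by linarith) one_pos
  have hrone : r ≤ 1 := min_le_right _ _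
  have hrδ : r < δ₀ := lt_of_le_of_lt (min_le_left _ _) (by linarith)
  have hball : ∀ x ∈ Set.Icc (a₀ - r) (a₀ + r), g x ∈ Set.Icc (m - ε * r) (m + ε * r) := by
    intro x hx
    have hdist : dist x a₀ < δ₀ := by
      rw [Real.dist_eq]
      have hxa : |x - a₀| ≤ r := abs_le.2 ⟨by linarith [hx.1], by linarith [hx.2]⟩
      linarith
    have := hδ₀ hdist
    simp only [smul_zero, sub_zero, Real.norm_eq_abs] at this
    have hxa : |x - a₀| ≤ r := abs_le.2 ⟨by linarith [hx.1], by linarith [hx.2]⟩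
    have h2 : |g x - m| ≤ ε * r := le_trans this
      (mul_le_mul_of_nonneg_left hxa hεpos.le)
    have := abs_le.mp h2
    exact ⟨by linarith [this.1], by linarith [this.2]⟩
  -- measure chain
  set B := Set.Icc (a₀ - r) (a₀ + r) with hB
  set J := Set.Icc (m - ε * r) (m + ε * r) with hJ
  have hlow : ENNReal.ofReal (c * (2 * r)) ≤ μA B := by
    rw [hμA, hB, withDensity_apply _ measurableSet_Icc]
    calc ENNReal.ofReal (c * (2 * r))
        = ENNReal.ofReal c * volume (Set.Icc (a₀ - r) (a₀ + r)) := by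
          rw [Real.volume_Icc, ENNReal.ofReal_mul hcpos.le]
          ring_nf
      _ = ∫⁻ _ in Set.Icc (a₀ - r) (a₀ + r), ENNReal.ofReal c := (setLIntegral_const _ _).symm
      _ ≤ ∫⁻ a in Set.Icc (a₀ - r) (a₀ + r), ENNReal.ofReal (pA a) := by
          refine setLIntegral_mono (ENNReal.measurable_ofReal.comp hpA.measurable) ?_
          intro a ha
          refine ENNReal.ofReal_le_ofReal (hminA ?_)
          exact ⟨by linarith [ha.1, hrone], by linarith [ha.2, hrone]⟩
  have hBsub : B ⊆ g ⁻¹' J := fun x hx => hball x hx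
  have hmid : μA B ≤ μC J := by
    calc μA B ≤ μA (g ⁻¹' J) := measure_mono hBsub
      _ = (Measure.map g μA) J := (Measure.map_apply hg.continuous.measurable
            measurableSet_Icc).symm
      _ = μC J := by rw [hpush]
  have hup : μC J ≤ ENNReal.ofReal (C * (2 * (ε * r))) := by
    rw [hμC, hJ, withDensity_apply _ measurableSet_Icc]
    calc ∫⁻ a in Set.Icc (m - ε * r) (m + ε * r), ENNReal.ofReal (pC a)
        ≤ ∫⁻ _ in Set.Icc (m - ε * r) (m + ε * r), ENNReal.ofReal C := by
          refine setLIntegral_mono measurable_const ?_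
          intro a ha
          refine ENNReal.ofReal_le_ofReal (le_trans (hmaxC ?_) (le_max_left _ _))
          have hεr : ε * r ≤ 1 := by nlinarith
          exact ⟨by linarith [ha.1], by linarith [ha.2]⟩
      _ = ENNReal.ofReal C * volume (Set.Icc (m - ε * r) (m + ε * r)) :=
          setLIntegral_const _ _
      _ = ENNReal.ofReal (C * (2 * (ε * r))) := by
          rw [Real.volume_Icc, ← ENNReal.ofReal_mul hCpos.le]
          ring_nf
  have hfinal : c * (2 * r) ≤ C * (2 * (ε * r)) := by
    have := le_trans hlow (le_trans hmid hup)
    rwa [ENNReal.ofReal_le_ofReal_iff (by positivity)] at this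
  have hCε : C * ε ≤ c / 2 := by
    have h := mul_le_mul_of_nonneg_left hεle hCpos.le
    have h2 : C * (c / (2 * C)) = c / 2 := by
      field_simp
    linarith
  nlinarith [mul_le_mul_of_nonneg_left hCε (by positivity : (0:ℝ) ≤ 2 * r)]

/-- A family of measure-preserving maps (pushing the `pA`-density
measure to the `pC`-density measure) indexed differentiably by `b` is constant in `b`. -/
theorem measure_preserving_family_constant
    (n : ℕ) (f : ℝ × (Fin n → ℝ) → ℝ)
    (pA pC : ℝ → ℝ)
    (hf : Differentiable ℝ f)
    (hpA : ContDiff ℝ 1 pA) (hpC : ContDiff ℝ 1 pC)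
    (hpApos : ∀ a, 0 < pA a) (hpCpos : ∀ c, 0 < pC c)
    (hpAint : ∫ a, pA a = 1) (hpCint : ∫ c, pC c = 1)
    (hpush : ∀ b : Fin n → ℝ,
      Measure.map (fun a => f (a, b))
        (volume.withDensity fun a => ENNReal.ofReal (pA a))
        = volume.withDensity fun c => ENNReal.ofReal (pC c)) :
    ∀ (a : ℝ) (b b' : Fin n → ℝ), f (a, b) = f (a, b') := by
  classical
  set μA := volume.withDensity fun a => ENNReal.ofReal (pA a) with hμA
  set μC := volume.withDensity fun c => ENNReal.ofReal (pC c) with hμC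
  have hgdiff : ∀ b : Fin n → ℝ, Differentiable ℝ (fun a => f (a, b)) := by
    intro b
    exact hf.comp (differentiable_id.prodMk (differentiable_const b))
  have hgder : ∀ (b : Fin n → ℝ) (a : ℝ), deriv (fun a => f (a, b)) a ≠ 0 := by
    intro b a
    exact deriv_ne_zero_of_measure_preserving _ (hgdiff b) pA pC
      hpA.continuous hpC.continuous hpApos hpCpos (hpush b) a
  have hmono : ∀ b : Fin n → ℝ,
      StrictMono (fun a => f (a, b)) ∨ StrictAnti (fun a => f (a, b)) := by
    intro b
    have hd : ∀ x ∈ Set.univ, HasDerivWithinAt (fun a => f (a, b))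
        (deriv (fun a => f (a, b)) x) Set.univ x := fun x _ =>
      ((hgdiff b x).hasDerivAt).hasDerivWithinAt
    rcases hasDerivWithinAt_forall_lt_or_forall_gt_of_forall_ne convex_univ hd
      (m := 0) (fun x _ => hgder b x) with h | h
    · exact Or.inr (strictAnti_of_deriv_neg fun x => h x trivial)
    · exact Or.inl (strictMono_of_deriv_pos fun x => h x trivial)
  -- finiteness of μC
  have hpCi : Integrable pC := by
    by_contra h
    rw [integral_undef h] at hpCint
    norm_num at hpCint
  have hμCuniv : μC Set.univ < ⊤ := by
    rw [hμC, withDensity_apply _ MeasurableSet.univ, Measure.restrict_univ]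
    exact hpCi.lintegral_lt_top
  -- injectivity of the CDF of μC
  have hFCmono : ∀ x y : ℝ, x < y → μC (Set.Iic x) < μC (Set.Iic y) := by
    intro x y hxy
    have hsplit : μC (Set.Iic y) = μC (Set.Iic x) + μC (Set.Ioc x y) := by
      rw [← Set.Iic_union_Ioc_eq_Iic hxy.le,
        measure_union (Set.Iic_disjoint_Ioc le_rfl) measurableSet_Ioc]
    rw [hsplit]
    refine ENNReal.lt_add_right ?_ ?_
    · exact ne_top_of_le_ne_top hμCuniv.ne (measure_mono (Set.subset_univ _))
    · exact (dens_meas_Ioc_pos pC hpC.continuous hpCpos x y hxy).ne'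
  have hFCinj : ∀ x y : ℝ, μC (Set.Iic x) = μC (Set.Iic y) → x = y := by
    intro x y h
    rcases lt_trichotomy x y with hlt | heq | hgt
    · exact absurd h (hFCmono x y hlt).ne
    · exact heq
    · exact absurd h.symm (hFCmono y x hgt).ne
  -- orientation is constant in b
  have hsame : ∀ b b' : Fin n → ℝ, f (0, b) < f (1, b) → f (0, b') < f (1, b') := by
    intro b b' hb
    by_contra h
    have hb' : f (1, b') < f (0, b') := by
      rcases hmono b' with hm | hm
      · exact absurd (hm (zero_lt_one)) h
      · exact hm zero_lt_one
    set φ : ℝ → ℝ := fun t => f (1, b + t • (b' - b)) - f (0, b + t • (b' - b)) with hφ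
    have hφcont : Continuous φ := by
      have hpath : Continuous fun t : ℝ => b + t • (b' - b) :=
        continuous_const.add (continuous_id.smul continuous_const)
      exact ((hf.continuous.comp (continuous_const.prodMk hpath)).sub
        (hf.continuous.comp (continuous_const.prodMk hpath)))
    have hφ0 : 0 < φ 0 := by simp [hφ, sub_pos, hb]
    have hφ1 : φ 1 < 0 := by simp [hφ, sub_neg, hb']
    have h0mem : (0:ℝ) ∈ Set.Icc (φ 1) (φ 0) := ⟨hφ1.le, hφ0.le⟩
    obtain ⟨t, ht, hφt⟩ := intermediate_value_Icc' (zero_le_one) hφcont.continuousOn h0mem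
    set b'' := b + t • (b' - b) with hb''
    have heq : f (0, b'') = f (1, b'') := by
      have : f (1, b'') - f (0, b'') = 0 := hφt
      linarith
    rcases hmono b'' with hm | hm
    · exact absurd heq (hm zero_lt_one).ne
    · exact absurd heq.symm (hm zero_lt_one).ne
  -- the CDF identity
  have hmapIic : ∀ (b : Fin n → ℝ) (x : ℝ),
      μC (Set.Iic x) = μA ((fun a => f (a, b)) ⁻¹' Set.Iic x) := by
    intro b x
    rw [← hpush b, Measure.map_apply (hgdiff b).continuous.measurable
      measurableSet_Iic]
  intro a b b'
  rcases hmono b with hb | hb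
  · have horb : f (0, b) < f (1, b) := hb zero_lt_one
    have hb'm : StrictMono (fun a => f (a, b')) := by
      rcases hmono b' with hm | hm
      · exact hm
      · exact absurd (hsame b b' horb) (not_lt.2 (hm zero_lt_one).le)
    have hpre : ∀ (b₀ : Fin n → ℝ), StrictMono (fun a => f (a, b₀)) →
        μC (Set.Iic (f (a, b₀))) = μA (Set.Iic a) := by
      intro b₀ hm
      rw [hmapIic b₀]
      congr 1
      ext x
      simp [hm.le_iff_le]
    exact hFCinj _ _ (by rw [hpre b hb, hpre b' hb'm])
  · have horb : f (1, b) < f (0, b) := hb zero_lt_one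
    have hb'a : StrictAnti (fun a => f (a, b')) := by
      rcases hmono b' with hm | hm
      · exact absurd (hsame b' b (hm zero_lt_one)) (not_lt.2 horb.le)
      · exact hm
    have hpre : ∀ (b₀ : Fin n → ℝ), StrictAnti (fun a => f (a, b₀)) →
        μC (Set.Iic (f (a, b₀))) = μA (Set.Ici a) := by
      intro b₀ hm
      rw [hmapIic b₀]
      congr 1
      ext x
      simp [hm.le_iff_ge]
    exact hFCinj _ _ (by rw [hpre b hb, hpre b' hb'a])
end
end

section
/- Let ψ : ℝ² → ℝ² be a diffeomorphism with ∂ψ₁/∂z₂ = 0 everywhere, so V₁ = ψ₁(Z₁). Let q̃₂ and p̃₂ be continuously differentiable, fully supported probability densities on ℝ satisfying, for all (z₁, z₂): q̃₂(z₂) = p̃₂(ψ₂(z₁, z₂)) · |∂ψ₂/∂z₂(z₁, z₂)|. Then ψ₂ is constant in z₁, i.e., ψ is an element-wise (diagonal) diffeomorphism ψ(z₁, z₂) = (ψ₁(z₁), ψ₂(z₂)). -/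
open MeasureTheory Filter Topology Set

noncomputable section

variable {ρ : ℝ → ℝ}

lemma integrable_of_integral_eq_one (h1 : ∫ x, ρ x = 1) : Integrable ρ := by
  by_contra h; rw [MeasureTheory.integral_undef h] at h1; norm_num at h1

lemma hasDerivAt_cdf0 (hi : Integrable ρ) (hc : Continuous ρ) (x : ℝ) :
    HasDerivAt (fun u => ∫ t in (0:ℝ)..u, ρ t) (ρ x) x :=
  intervalIntegral.integral_hasDerivAt_right hi.intervalIntegrable
    (hc.stronglyMeasurableAtFilter _ _) hc.continuousAt

lemma strictMono_cdf0 (hi : Integrable ρ) (hpos : ∀ x, 0 < ρ x) :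
    StrictMono (fun u => ∫ t in (0:ℝ)..u, ρ t) := by
  intro x y hxy
  have h := intervalIntegral.integral_add_adjacent_intervals
    (hi.intervalIntegrable (a := 0) (b := x)) (hi.intervalIntegrable (a := x) (b := y))
  have hpos' := intervalIntegral.intervalIntegral_pos_of_pos
    (hi.intervalIntegrable (a := x) (b := y)) hpos hxy
  simp only []
  linarith [h]

lemma tendsto_cdf0_atTop (hi : Integrable ρ) :
    Tendsto (fun u => ∫ t in (0:ℝ)..u, ρ t) atTop (𝓝 (∫ t in Ioi (0:ℝ), ρ t)) :=
  MeasureTheory.intervalIntegral_tendsto_integral_Ioi 0 hi.integrableOn tendsto_id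

lemma tendsto_cdf0_atBot (hi : Integrable ρ) :
    Tendsto (fun u => ∫ t in (0:ℝ)..u, ρ t) atBot (𝓝 (-∫ t in Iic (0:ℝ), ρ t)) := by
  have := (MeasureTheory.intervalIntegral_tendsto_integral_Iic 0 hi.integrableOn
    (tendsto_id (α := ℝ))).neg
  refine this.congr fun u => ?_
  rw [← intervalIntegral.integral_symm]
  rfl

lemma cdf0_total (hi : Integrable ρ) (h1 : ∫ x, ρ x = 1) :
    (∫ t in Ioi (0:ℝ), ρ t) - (-∫ t in Iic (0:ℝ), ρ t) = 1 := by
  have := intervalIntegral.integral_Iic_add_Ioi (b := (0:ℝ)) hi.integrableOn hi.integrableOn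
  linarith [this, h1]


def IsDiffeo {E F : Type*} [NormedAddCommGroup E] [NormedSpace ℝ E]
    [NormedAddCommGroup F] [NormedSpace ℝ F] (f : E → F) : Prop :=
  ∃ g : F → E, Function.LeftInverse g f ∧ Function.RightInverse g f ∧
    ContDiff ℝ 1 f ∧ ContDiff ℝ 1 g

/-- if `∂ψ₁/∂z₂ = 0` and for each `z₁` the map `z₂ ↦ ψ₂(z₁,z₂)`
pushes the density `q̃₂` forward to `p̃₂` via the univariate change of variables
formula, then `ψ₂` is constant in `z₁`, i.e. `ψ` is element-wise. -/
theorem triangular_measure_preserving_elementwise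
    (ψ : ℝ × ℝ → ℝ × ℝ) (hψ : IsDiffeo ψ)
    (htri : ∀ z : ℝ × ℝ, deriv (fun t => (ψ (z.1, t)).1) z.2 = 0)
    (qt pt : ℝ → ℝ)
    (hqt : ContDiff ℝ 1 qt) (hpt : ContDiff ℝ 1 pt)
    (hqtpos : ∀ x, 0 < qt x) (hptpos : ∀ x, 0 < pt x)
    (hqint : ∫ x, qt x = 1) (hpint : ∫ x, pt x = 1)
    (hcov : ∀ z : ℝ × ℝ,
      qt z.2 = pt ((ψ z).2) * |deriv (fun t => (ψ (z.1, t)).2) z.2|) :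
    ∀ z₁ z₁' z₂ : ℝ, (ψ (z₁, z₂)).2 = (ψ (z₁', z₂)).2 := by
  obtain ⟨φ, hl, hr, hψc, hφc⟩ := hψ
  have hqc : Continuous qt := hqt.continuous
  have hpc : Continuous pt := hpt.continuous
  have hqi : Integrable qt := _root_.integrable_of_integral_eq_one hqint
  have hpi : Integrable pt := _root_.integrable_of_integral_eq_one hpint
  set Q : ℝ → ℝ := fun u => ∫ t in (0:ℝ)..u, qt t with hQdef
  set P : ℝ → ℝ := fun u => ∫ t in (0:ℝ)..u, pt t with hPdef
  -- the second component of ψ, as a C¹ function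
  set F : ℝ × ℝ → ℝ := fun z => (ψ z).2 with hFdef
  have hFc : ContDiff ℝ 1 F := contDiff_snd.comp hψc
  set g : ℝ × ℝ → ℝ := fun z => (fderiv ℝ F z) (0, 1) with hgdef
  have hder : ∀ z : ℝ × ℝ, HasDerivAt (fun t => F (z.1, t)) (g z) z.2 := by
    intro z
    have h1 : HasDerivAt (fun t : ℝ => ((z.1 : ℝ), t)) ((0 : ℝ), (1 : ℝ)) z.2 :=
      (hasDerivAt_const _ _).prodMk (hasDerivAt_id _)
    have h2 : HasFDerivAt F (fderiv ℝ F (z.1, z.2)) (z.1, z.2) :=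
      (hFc.differentiable one_ne_zero _).hasFDerivAt
    exact h2.comp_hasDerivAt z.2 h1
  have hderiv_eq : ∀ z : ℝ × ℝ, deriv (fun t => (ψ (z.1, t)).2) z.2 = g z :=
    fun z => (hder z).deriv
  have hcov' : ∀ z : ℝ × ℝ, qt z.2 = pt (F z) * |g z| := by
    intro z
    have := hcov z
    rwa [hderiv_eq z] at this
  have hgne : ∀ z : ℝ × ℝ, g z ≠ 0 := by
    intro z hz
    have := hcov' z
    rw [hz] at this
    simp at this
    exact absurd this (ne_of_gt (hqtpos z.2))
  have hgc : Continuous g := by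
    have h1 : Continuous (fun z => fderiv ℝ F z) := hFc.continuous_fderiv one_ne_zero
    exact h1.clm_apply continuous_const
  -- sign dichotomy by connectedness (IVT on segments)
  have hsign : (∀ z, 0 < g z) ∨ (∀ z, g z < 0) := by
    by_contra h
    push_neg at h
    obtain ⟨⟨a, ha⟩, ⟨b, hb⟩⟩ := h
    have ha' : g a < 0 := lt_of_le_of_ne ha (hgne a)
    have hb' : 0 < g b := lt_of_le_of_ne hb (Ne.symm (hgne b))
    have hc : Continuous (fun t : ℝ => g (a + t • (b - a))) := by
      apply hgc.comp
      exact continuous_const.add (continuous_id.smul continuous_const)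
    have hiv := intermediate_value_Icc (zero_le_one (α := ℝ)) hc.continuousOn
    have h0 : (0 : ℝ) ∈ Icc ((fun t : ℝ => g (a + t • (b - a))) 0)
        ((fun t : ℝ => g (a + t • (b - a))) 1) := by
      constructor <;> simp <;> [exact ha'.le; exact hb'.le]
    obtain ⟨t, _, ht⟩ := hiv h0
    exact hgne _ ht
  obtain ⟨s, hs, hsg⟩ : ∃ s : ℝ, (s = 1 ∨ s = -1) ∧ ∀ z, s * |g z| = g z := by
    rcases hsign with h | h
    · exact ⟨1, Or.inl rfl, fun z => by rw [abs_of_pos (h z)]; ring⟩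
    · exact ⟨-1, Or.inr rfl, fun z => by rw [abs_of_neg (h z)]; ring⟩
  -- key identity: for each w₁, t ↦ P (F (w₁, t)) - s * Q t is constant
  have key : ∀ w₁ t : ℝ, P (F (w₁, t)) - s * Q t = P (F (w₁, 0)) - s * Q 0 := by
    intro w₁ t
    have hder0 : ∀ u : ℝ, HasDerivAt (fun t => P (F (w₁, t)) - s * Q t) 0 u := by
      intro u
      have h1 : HasDerivAt (fun t => F (w₁, t)) (g (w₁, u)) u := hder (w₁, u)
      have h2 : HasDerivAt P (pt (F (w₁, u))) (F (w₁, u)) :=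
        hasDerivAt_cdf0 hpi hpc _
      have h3 : HasDerivAt (fun t => P (F (w₁, t))) (pt (F (w₁, u)) * g (w₁, u)) u :=
        HasDerivAt.comp (h := fun t => F (w₁, t)) u h2 h1
      have h4 : HasDerivAt (fun t => s * Q t) (s * qt u) u :=
        (hasDerivAt_cdf0 hqi hqc u).const_mul s
      have h5 := h3.sub h4
      have h6 : pt (F (w₁, u)) * g (w₁, u) - s * qt u = 0 := by
        have hc := hcov' (w₁, u)
        have hg := hsg (w₁, u)
        simp only at hc
        rw [hc, show s * (pt (F (w₁, u)) * |g (w₁, u)|) =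
          pt (F (w₁, u)) * (s * |g (w₁, u)|) by ring, hg, sub_self]
      rwa [h6] at h5
    have hdiff : Differentiable ℝ (fun t => P (F (w₁, t)) - s * Q t) :=
      fun u => (hder0 u).differentiableAt
    exact is_const_of_deriv_eq_zero hdiff (fun u => (hder0 u).deriv) t 0
  -- limits of P and Q
  set AP : ℝ := ∫ t in Ioi (0:ℝ), pt t with hAP
  set BP : ℝ := -∫ t in Iic (0:ℝ), pt t with hBP
  set AQ : ℝ := ∫ t in Ioi (0:ℝ), qt t with hAQ
  set BQ : ℝ := -∫ t in Iic (0:ℝ), qt t with hBQ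
  have hPtop : Tendsto P atTop (𝓝 AP) := tendsto_cdf0_atTop hpi
  have hPbot : Tendsto P atBot (𝓝 BP) := tendsto_cdf0_atBot hpi
  have hQtop : Tendsto Q atTop (𝓝 AQ) := tendsto_cdf0_atTop hqi
  have hQbot : Tendsto Q atBot (𝓝 BQ) := tendsto_cdf0_atBot hqi
  have hPmonos : StrictMono P := strictMono_cdf0 hpi hptpos
  have hPmono : Monotone P := hPmonos.monotone
  have hPd : AP - BP = 1 := cdf0_total hpi hpint
  have hQd : AQ - BQ = 1 := cdf0_total hqi hqint
  have hPub : ∀ x, P x ≤ AP := fun x => hPmono.ge_of_tendsto hPtop x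
  have hPlb : ∀ x, BP ≤ P x := fun x => hPmono.le_of_tendsto hPbot x
  -- the constant is independent of w₁
  have hineq : ∀ w₁ : ℝ, BP ≤ s * AQ + (P (F (w₁, 0)) - s * Q 0) ∧
      s * AQ + (P (F (w₁, 0)) - s * Q 0) ≤ AP ∧
      BP ≤ s * BQ + (P (F (w₁, 0)) - s * Q 0) ∧
      s * BQ + (P (F (w₁, 0)) - s * Q 0) ≤ AP := by
    intro w₁
    set c : ℝ := P (F (w₁, 0)) - s * Q 0 with hc
    have heq : ∀ t, P (F (w₁, t)) = s * Q t + c := by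
      intro t; have := key w₁ t; linarith
    have htop : Tendsto (fun t => s * Q t + c) atTop (𝓝 (s * AQ + c)) :=
      ((hQtop.const_mul s).add_const c)
    have hbot : Tendsto (fun t => s * Q t + c) atBot (𝓝 (s * BQ + c)) :=
      ((hQbot.const_mul s).add_const c)
    have hub : ∀ t, s * Q t + c ≤ AP := fun t => (heq t) ▸ hPub _
    have hlb : ∀ t, BP ≤ s * Q t + c := fun t => (heq t) ▸ hPlb _
    refine ⟨ge_of_tendsto htop (Eventually.of_forall hlb),
      le_of_tendsto htop (Eventually.of_forall hub),
      ge_of_tendsto hbot (Eventually.of_forall hlb),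
      le_of_tendsto hbot (Eventually.of_forall hub)⟩
  intro z₁ z₁' z₂
  have h1 := key z₁ z₂
  have h2 := key z₁' z₂
  obtain ⟨a1, a2, a3, a4⟩ := hineq z₁
  obtain ⟨b1, b2, b3, b4⟩ := hineq z₁'
  have hPeq : P (F (z₁, z₂)) = P (F (z₁', z₂)) := by
    rcases hs with rfl | rfl <;> nlinarith
  exact hPmonos.injective hPeq
end
end

section
/- Let P_V be a distribution on ℝⁿ that is Markovian with respect to a DAG G, let π be a graph isomorphism of G onto a DAG G', and let φ be an element-wise diffeomorphism of ℝⁿ. Define Z = P_{π⁻¹} ∘ φ(V) with induced distribution Q_Z, where P_π is the permutation matrix of π. Then for every edge V_i → V_j in G, the causal influence satisfies 𝔠^{P_V}_{i→j} = 𝔠^{Q_Z}_{π(i)→π(j)}. -/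
open MeasureTheory

noncomputable section

/-- The marginal density of the `i`-th coordinate of a joint density `p` on ℝⁿ. -/
noncomputable def marginal {n : ℕ} (p : (Fin n → ℝ) → ℝ) (i : Fin n) (x : ℝ) : ℝ :=
  ∫ u : {k : Fin n // k ≠ i} → ℝ, p (fun k => if h : k = i then x else u ⟨k, h⟩)

/-- The causal influence `𝔠_{i→j} = D_KL(P_V ‖ P_V^{i→j})` of a Markov factorization
given by the mechanisms `mech i (v_i) (v)` (each depending only on the parents of `i`):
the mechanism of node `j` is replaced by `v ↦ ∫ mech j (v j) (v with v_i := t) · p_i(t) dt`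
where `p_i` is the marginal of `V_i`. -/
noncomputable def causalInfluence {n : ℕ}
    (mech : Fin n → ℝ → (Fin n → ℝ) → ℝ) (i j : Fin n) : ℝ :=
  let p : (Fin n → ℝ) → ℝ := fun v => ∏ k, mech k (v k) v
  let pij : (Fin n → ℝ) → ℝ := fun v =>
    (∏ k ∈ Finset.univ.erase j, mech k (v k) v) *
      ∫ t : ℝ, mech j (v j) (Function.update v i t) * marginal p i t
  ∫ v : Fin n → ℝ, p v * Real.log (p v / pij v)

/- ### Auxiliary change-of-variables machinery -/

lemma IsDiffeo.deriv_ne {f : ℝ → ℝ} (hf : IsDiffeo f) (x : ℝ) : deriv f x ≠ 0 := by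
  obtain ⟨g, hl, hr, hc, hc'⟩ := hf
  have hdf : HasDerivAt f (deriv f x) x := ((hc.differentiable one_ne_zero) x).hasDerivAt
  have hdg : HasDerivAt g (deriv g (f x)) (f x) := ((hc'.differentiable one_ne_zero) (f x)).hasDerivAt
  have hcomp : HasDerivAt (g ∘ f) (deriv g (f x) * deriv f x) x := hdg.comp x hdf
  have hid : HasDerivAt (g ∘ f) 1 x := by
    have : (g ∘ f) = id := funext hl
    rw [this]; simpa using hasDerivAt_id x
  have h1 : deriv g (f x) * deriv f x = 1 := hcomp.unique hid
  intro h0; rw [h0, mul_zero] at h1; exact one_ne_zero h1.symm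

lemma cov_one {f : ℝ → ℝ} (hf : IsDiffeo f) (g : ℝ → ℝ) :
    ∫ t, |deriv f t| * g (f t) = ∫ s, g s := by
  obtain ⟨f', hl, hr, hc, hc'⟩ := hf
  have hd : ∀ x, HasDerivAt f (deriv f x) x := fun x => ((hc.differentiable one_ne_zero) x).hasDerivAt
  have h := integral_image_eq_integral_abs_deriv_smul MeasurableSet.univ
    (fun x _ => (hd x).hasDerivWithinAt) hl.injective.injOn g
  rw [Set.image_univ, hr.surjective.range_eq, Measure.restrict_univ] at h
  simpa [smul_eq_mul] using h.symm

lemma det_diag_clm {ι : Type*} [Fintype ι] [DecidableEq ι] (c : ι → ℝ) :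
    (ContinuousLinearMap.pi fun k : ι => c k • ContinuousLinearMap.proj (R := ℝ)
      (φ := fun _ : ι => ℝ) k).det = ∏ k, c k := by
  rw [ContinuousLinearMap.det, ← LinearMap.det_toMatrix']
  have : LinearMap.toMatrix' ((ContinuousLinearMap.pi fun k : ι => c k • ContinuousLinearMap.proj
      (R := ℝ) (φ := fun _ : ι => ℝ) k : (ι → ℝ) →L[ℝ] (ι → ℝ)) : (ι → ℝ) →ₗ[ℝ] (ι → ℝ))
      = Matrix.diagonal c := by
    ext k l
    by_cases h : k = l <;>
      simp [LinearMap.toMatrix'_apply, Matrix.diagonal_apply, Pi.single_apply, h]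
  rw [this, Matrix.det_diagonal]

lemma cov_diag {ι : Type*} [Fintype ι] [DecidableEq ι]
    (f : ι → ℝ → ℝ) (hf : ∀ k, IsDiffeo (f k)) (g : (ι → ℝ) → ℝ) :
    ∫ v : ι → ℝ, (∏ k, |deriv (f k) (v k)|) * g (fun k => f k (v k)) = ∫ w : ι → ℝ, g w := by
  classical
  set Φ : (ι → ℝ) → (ι → ℝ) := fun v k => f k (v k) with hΦ
  set A : (ι → ℝ) → ((ι → ℝ) →L[ℝ] (ι → ℝ)) := fun v =>
    ContinuousLinearMap.pi fun k => deriv (f k) (v k) • ContinuousLinearMap.proj k with hA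
  have hder : ∀ v, HasFDerivAt Φ (A v) v := by
    intro v
    apply hasFDerivAt_pi.2
    intro k
    have h1 : HasDerivAt (f k) (deriv (f k) (v k)) (v k) :=
      (((hf k).choose_spec.2.2.1.differentiable one_ne_zero) (v k)).hasDerivAt
    have h2 : HasFDerivAt (fun u : ι → ℝ => u k)
        (ContinuousLinearMap.proj (R := ℝ) (φ := fun _ : ι => ℝ) k) v := hasFDerivAt_apply k v
    exact h1.comp_hasFDerivAt v h2
  have hinj : Function.Injective Φ := by
    intro v v' h
    funext k
    exact (hf k).choose_spec.1.injective (congrFun h k)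
  have hsurj : Function.Surjective Φ := by
    intro w
    exact ⟨fun k => (hf k).choose (w k), funext fun k => (hf k).choose_spec.2.1 (w k)⟩
  have h := integral_image_eq_integral_abs_det_fderiv_smul volume MeasurableSet.univ
    (fun x _ => (hder x).hasFDerivWithinAt) hinj.injOn g
  rw [Set.image_univ, hsurj.range_eq, Measure.restrict_univ] at h
  rw [h]
  congr 1
  funext v
  simp only [hA, hΦ, det_diag_clm, smul_eq_mul, Finset.abs_prod]

lemma cov_main {ι ι' : Type*} [Fintype ι] [DecidableEq ι] [Fintype ι'] (e : ι ≃ ι')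
    (f : ι → ℝ → ℝ) (hf : ∀ k, IsDiffeo (f k)) (g : (ι → ℝ) → ℝ) :
    ∫ u : ι' → ℝ, (∏ k, |deriv (f k) (u (e k))|) * g (fun k => f k (u (e k)))
      = ∫ w : ι → ℝ, g w := by
  classical
  set F : (ι → ℝ) → ℝ := fun v => (∏ k, |deriv (f k) (v k)|) * g (fun k => f k (v k)) with hF
  have h1 := (volume_measurePreserving_piCongrLeft (fun _ : ι => ℝ) e.symm).integral_comp' F
  have h2 : ∀ (u : ι' → ℝ) (k : ι),
      (MeasurableEquiv.piCongrLeft (fun _ : ι => ℝ) e.symm) u k = u (e k) := by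
    intro u k
    conv_lhs => rw [show k = e.symm (e k) by simp]
    rw [MeasurableEquiv.coe_piCongrLeft, Equiv.piCongrLeft_apply_apply]
  have h3 : ∀ u : ι' → ℝ, F ((MeasurableEquiv.piCongrLeft (fun _ : ι => ℝ) e.symm) u)
      = (∏ k, |deriv (f k) (u (e k))|) * g (fun k => f k (u (e k))) := by
    intro u
    simp only [hF, h2]
  calc ∫ u : ι' → ℝ, (∏ k, |deriv (f k) (u (e k))|) * g (fun k => f k (u (e k)))
      = ∫ u : ι' → ℝ, F ((MeasurableEquiv.piCongrLeft (fun _ : ι => ℝ) e.symm) u) := by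
        simp only [h3]
    _ = ∫ v : ι → ℝ, F v := h1
    _ = ∫ w : ι → ℝ, g w := cov_diag f hf g

/- ### Main theorem -/

/-- causal influences are invariant under the `∼_CRL` ambiguities:
a permutation `π` that is a graph isomorphism composed with an element-wise
diffeomorphism (so that `V_i = ψ_i(Z_{π(i)})`). -/
theorem causal_influence_preserved
    (n : ℕ) (E E' : Fin n → Fin n → Prop)
    (hacyc : ∀ i, ¬ Relation.TransGen E i i)
    (mech qmech : Fin n → ℝ → (Fin n → ℝ) → ℝ)
    (hmechPa : ∀ i x v v', (∀ k, E k i → v k = v' k) → mech i x v = mech i x v')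
    (hmechPos : ∀ i x v, 0 < mech i x v)
    (hmechC1 : ∀ i v, ContDiff ℝ 1 (fun x => mech i x v))
    (hmechInt : ∀ i v, ∫ x : ℝ, mech i x v = 1)
    (π : Equiv.Perm (Fin n))
    (hiso : ∀ i j, E i j ↔ E' (π i) (π j))
    (ψ : Fin n → ℝ → ℝ) (hψ : ∀ i, IsDiffeo (ψ i))
    (hq : ∀ (i : Fin n) (x : ℝ) (z : Fin n → ℝ),
      qmech (π i) x z = mech i (ψ i x) (fun k => ψ k (z (π k))) * |deriv (ψ i) x|)
    (i j : Fin n) (hij : E i j) :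
    causalInfluence mech i j = causalInfluence qmech (π i) (π j) := by
  classical
  set Φ : (Fin n → ℝ) → (Fin n → ℝ) := fun z k => ψ k (z (π k)) with hΦdef
  set J : (Fin n → ℝ) → ℝ := fun z => ∏ k, |deriv (ψ k) (z (π k))| with hJdef
  set p : (Fin n → ℝ) → ℝ := fun v => ∏ k, mech k (v k) v with hpdef
  set q : (Fin n → ℝ) → ℝ := fun z => ∏ k, qmech k (z k) z with hqdef
  -- the factorization of q
  have hqfact : ∀ z, q z = p (Φ z) * J z := by
    intro z
    calc q z = ∏ k, qmech (π k) (z (π k)) z :=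
          (Equiv.prod_comp π fun m => qmech m (z m) z).symm
      _ = ∏ k, (mech k (ψ k (z (π k))) (Φ z) * |deriv (ψ k) (z (π k))|) :=
          Finset.prod_congr rfl fun k _ => hq k (z (π k)) z
      _ = p (Φ z) * J z := by rw [Finset.prod_mul_distrib]
  -- J never vanishes
  have hJne : ∀ z, J z ≠ 0 := by
    intro z
    refine Finset.prod_ne_zero_iff.2 fun k _ => ?_
    simpa [abs_eq_zero] using (hψ k).deriv_ne (z (π k))
  -- the subtype equivalence
  have hπne : ∀ {a : Fin n}, a ≠ i → π a ≠ π i := fun h hh => h (π.injective hh)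
  set e : {k : Fin n // k ≠ i} ≃ {m : Fin n // m ≠ π i} :=
    Equiv.subtypeEquiv π (fun a => not_congr (Equiv.apply_eq_iff_eq π).symm) with hedef
  -- the marginal transforms correctly
  have hmarg : ∀ x, marginal q (π i) x = marginal p i (ψ i x) * |deriv (ψ i) x| := by
    intro x
    have key : ∀ u : {m : Fin n // m ≠ π i} → ℝ,
        q (fun k => if h : k = π i then x else u ⟨k, h⟩)
        = |deriv (ψ i) x| *
          ((∏ k : {k : Fin n // k ≠ i}, |deriv (ψ (k : Fin n)) (u (e k))|) *
            (fun w : {k : Fin n // k ≠ i} → ℝ =>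
              p (fun k => if h : k = i then ψ i x else w ⟨k, h⟩)) (fun k => ψ (k : Fin n) (u (e k)))) := by
      intro u
      set Z : Fin n → ℝ := fun k => if h : k = π i then x else u ⟨k, h⟩ with hZ
      have hZπi : Z (π i) = x := by simp [hZ]
      have hZπ : ∀ (k : Fin n) (hk : k ≠ i), Z (π k) = u ⟨π k, hπne hk⟩ := by
        intro k hk
        simp only [hZ]
        rw [dif_neg (hπne hk)]
      have hΦZ : Φ Z = fun k => if h : k = i then ψ i x
          else (fun c : {k : Fin n // k ≠ i} => ψ (c : Fin n) (u (e c))) ⟨k, h⟩ := by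
        funext k
        by_cases h : k = i
        · subst h
          simp [hΦdef, hZπi]
        · simp only [hΦdef, dif_neg h]
          rw [hZπ k h]
          rfl
      have hJZ : J Z = |deriv (ψ i) x| *
          ∏ k : {k : Fin n // k ≠ i}, |deriv (ψ (k : Fin n)) (u (e k))| := by
        have h1 : J Z = |deriv (ψ i) (Z (π i))| *
            ∏ k ∈ Finset.univ.erase i, |deriv (ψ k) (Z (π k))| :=
          (Finset.mul_prod_erase Finset.univ (fun k => |deriv (ψ k) (Z (π k))|)
            (Finset.mem_univ i)).symm
        rw [h1, hZπi]
        congr 1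
        rw [Finset.prod_subtype (Finset.univ.erase i)
          (p := fun k => k ≠ i) (fun k => by simp) (fun k => |deriv (ψ k) (Z (π k))|)]
        refine Finset.prod_congr rfl fun k _ => ?_
        rw [hZπ (k : Fin n) k.2]
        rfl
      rw [hqfact Z, hΦZ, hJZ]
      ring
    calc marginal q (π i) x
        = ∫ u : {m : Fin n // m ≠ π i} → ℝ, |deriv (ψ i) x| *
            ((∏ k : {k : Fin n // k ≠ i}, |deriv (ψ (k : Fin n)) (u (e k))|) *
              (fun w : {k : Fin n // k ≠ i} → ℝ =>
                p (fun k => if h : k = i then ψ i x else w ⟨k, h⟩))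
                (fun k => ψ (k : Fin n) (u (e k)))) := by
          unfold marginal
          exact integral_congr_ae (Filter.Eventually.of_forall key)
      _ = |deriv (ψ i) x| * ∫ u : {m : Fin n // m ≠ π i} → ℝ,
            (∏ k : {k : Fin n // k ≠ i}, |deriv (ψ (k : Fin n)) (u (e k))|) *
              (fun w : {k : Fin n // k ≠ i} → ℝ =>
                p (fun k => if h : k = i then ψ i x else w ⟨k, h⟩))
                (fun k => ψ (k : Fin n) (u (e k))) := integral_const_mul _ _
      _ = |deriv (ψ i) x| * marginal p i (ψ i x) := by
          rw [cov_main e (fun k : {k : Fin n // k ≠ i} => ψ (k : Fin n)) (fun k => hψ k)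
            (fun w => p (fun k => if h : k = i then ψ i x else w ⟨k, h⟩))]
          rfl
      _ = marginal p i (ψ i x) * |deriv (ψ i) x| := mul_comm _ _
  -- update identity
  have hupdate : ∀ z t, (fun k => ψ k ((Function.update z (π i) t) (π k)))
      = Function.update (Φ z) i (ψ i t) := by
    intro z t
    funext k
    by_cases h : k = i
    · subst h
      simp [Function.update_self]
    · rw [Function.update_of_ne h]
      rw [Function.update_of_ne (hπne h)]
  -- the modified-mechanism integral transforms correctly
  have hinner : ∀ z, (∫ t, qmech (π j) (z (π j)) (Function.update z (π i) t) * marginal q (π i) t)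
      = |deriv (ψ j) (z (π j))| *
        ∫ s, mech j (Φ z j) (Function.update (Φ z) i s) * marginal p i s := by
    intro z
    have step : ∀ t, qmech (π j) (z (π j)) (Function.update z (π i) t) * marginal q (π i) t
        = |deriv (ψ j) (z (π j))| * (|deriv (ψ i) t| *
            ((fun s => mech j (Φ z j) (Function.update (Φ z) i s) * marginal p i s) (ψ i t))) := by
      intro t
      rw [hq j (z (π j)) (Function.update z (π i) t), hupdate z t, hmarg t]
      show mech j (ψ j (z (π j))) (Function.update (Φ z) i (ψ i t)) * |deriv (ψ j) (z (π j))| *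
        (marginal p i (ψ i t) * |deriv (ψ i) t|) = _
      have : ψ j (z (π j)) = Φ z j := rfl
      rw [this]
      ring
    calc (∫ t, qmech (π j) (z (π j)) (Function.update z (π i) t) * marginal q (π i) t)
        = ∫ t, |deriv (ψ j) (z (π j))| * (|deriv (ψ i) t| *
            ((fun s => mech j (Φ z j) (Function.update (Φ z) i s) * marginal p i s) (ψ i t))) :=
          integral_congr_ae (Filter.Eventually.of_forall step)
      _ = |deriv (ψ j) (z (π j))| * ∫ t, |deriv (ψ i) t| *
            ((fun s => mech j (Φ z j) (Function.update (Φ z) i s) * marginal p i s) (ψ i t)) :=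
          integral_const_mul _ _
      _ = |deriv (ψ j) (z (π j))| *
            ∫ s, mech j (Φ z j) (Function.update (Φ z) i s) * marginal p i s := by
          congr 1
          exact cov_one (hψ i)
            (fun s => mech j (Φ z j) (Function.update (Φ z) i s) * marginal p i s)
  -- the erased product transforms correctly
  have herase : ∀ z, (∏ m ∈ Finset.univ.erase (π j), qmech m (z m) z)
      = (∏ k ∈ Finset.univ.erase j, mech k (Φ z k) (Φ z)) *
        ∏ k ∈ Finset.univ.erase j, |deriv (ψ k) (z (π k))| := by
    intro z
    have h1 : Finset.univ.erase (π j) = (Finset.univ.erase j).image π := by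
      rw [Finset.image_erase π.injective, Finset.image_univ_equiv]
    rw [h1, Finset.prod_image (fun a _ b _ h => π.injective h), ← Finset.prod_mul_distrib]
    exact Finset.prod_congr rfl fun k _ => hq k (z (π k)) z
  -- abbreviations for the replaced joint densities
  set pij : (Fin n → ℝ) → ℝ := fun v =>
    (∏ k ∈ Finset.univ.erase j, mech k (v k) v) *
      ∫ t : ℝ, mech j (v j) (Function.update v i t) * marginal p i t with hpijdef
  set qij : (Fin n → ℝ) → ℝ := fun z =>
    (∏ m ∈ Finset.univ.erase (π j), qmech m (z m) z) *
      ∫ t : ℝ, qmech (π j) (z (π j)) (Function.update z (π i) t) * marginal q (π i) t with hqijdef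
  have hqij : ∀ z, qij z = pij (Φ z) * J z := by
    intro z
    have hJsplit : J z = |deriv (ψ j) (z (π j))| *
        ∏ k ∈ Finset.univ.erase j, |deriv (ψ k) (z (π k))| :=
      (Finset.mul_prod_erase Finset.univ (fun k => |deriv (ψ k) (z (π k))|)
        (Finset.mem_univ j)).symm
    simp only [hqijdef, hpijdef]
    rw [herase z, hinner z, hJsplit]
    ring
  -- pointwise identity of the KL integrands
  have hpoint : ∀ z, q z * Real.log (q z / qij z)
      = (∏ k, |deriv (ψ k) (z (π k))|) *
        ((fun v => p v * Real.log (p v / pij v)) (fun k => ψ k (z (π k)))) := by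
    intro z
    have hratio : q z / qij z = p (Φ z) / pij (Φ z) := by
      rw [hqfact z, hqij z]
      exact mul_div_mul_right _ _ (hJne z)
    have h1 : (fun k => ψ k (z (π k))) = Φ z := rfl
    rw [h1, hratio, hqfact z]
    show p (Φ z) * J z * Real.log (p (Φ z) / pij (Φ z)) = J z * (p (Φ z) * Real.log (p (Φ z) / pij (Φ z)))
    ring
  -- conclude
  show (∫ v : Fin n → ℝ, p v * Real.log (p v / pij v)) = ∫ z : Fin n → ℝ, q z * Real.log (q z / qij z)
  calc (∫ v : Fin n → ℝ, p v * Real.log (p v / pij v))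
      = ∫ z : Fin n → ℝ, (∏ k, |deriv (ψ k) (z (π k))|) *
          ((fun v => p v * Real.log (p v / pij v)) (fun k => ψ k (z (π k)))) :=
        (cov_main (π : Fin n ≃ Fin n) ψ hψ (fun v => p v * Real.log (p v / pij v))).symm
    _ = ∫ z : Fin n → ℝ, q z * Real.log (q z / qij z) :=
        integral_congr_ae (Filter.Eventually.of_forall fun z => (hpoint z).symm)
end
end

section
/- Let p₁, p̃₁ be fully supported continuously differentiable densities on ℝ and p₂(·|v₁), p̃₂ be fully supported continuously differentiable (conditional) densities on ℝ. For v₁ ∈ ℝ define b_{v₁}(v₂) = p̃₂(v₂)/p₂(v₂|v₁) and assume b_{v₁} is a diffeomorphism of ℝ onto its image for every v₁. Suppose that for all w₁ in the common image: ∫ (p̃₁(v₁) − p₁(v₁)) p₂(b_{v₁}⁻¹(w₁) | v₁) |d/dw₁ b_{v₁}⁻¹(w₁)| dv₁ = 0. Then for every continuous function φ : ℝ⁺ → ℝ, E_{(v₁,v₂) ~ p₁(v₁)p₂(v₂|v₁)}[φ(p̃₂(v₂)/p₂(v₂|v₁))] = E_{(v₁,v₂) ~ p̃₁(v₁)p₂(v₂|v₁)}[φ(p̃₂(v₂)/p₂(v₂|v₁))].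 -/
set_option maxHeartbeats 2000000


open MeasureTheory

noncomputable section

open Set in
/-- Key IVT lemma: near a point `(v₁, b v₁ x)`, every `(u, w)` has a preimage `z` of `w`
under `b u` that is `ε`-close to `x`. -/
theorem aux_inv_key {b : ℝ → ℝ → ℝ} (hb : Continuous fun q : ℝ × ℝ => b q.1 q.2)
    (hinj : ∀ v₁, Function.Injective (b v₁)) (v₁ x ε : ℝ) (hε : 0 < ε) :
    ∃ U : Set (ℝ × ℝ), IsOpen U ∧ (v₁, b v₁ x) ∈ U ∧
      ∀ q ∈ U, ∃ z, |z - x| < ε ∧ b q.1 z = q.2 := by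
  have hbc : ∀ u, Continuous (b u) := fun u =>
    hb.comp (continuous_const.prodMk continuous_id)
  have h1 : Continuous fun q : ℝ × ℝ => b q.1 (x - ε) :=
    hb.comp (continuous_fst.prodMk continuous_const)
  have h2 : Continuous fun q : ℝ × ℝ => b q.1 (x + ε) :=
    hb.comp (continuous_fst.prodMk continuous_const)
  have hle : x - ε ≤ x + ε := by linarith
  rcases (hbc v₁).strictMono_of_inj (hinj v₁) with hm | hm
  · refine ⟨{q : ℝ × ℝ | b q.1 (x - ε) < q.2 ∧ q.2 < b q.1 (x + ε)},
      (isOpen_lt h1 continuous_snd).inter (isOpen_lt continuous_snd h2),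
      ⟨hm (by linarith), hm (by linarith)⟩, ?_⟩
    rintro ⟨u, w⟩ ⟨hw1, hw2⟩
    obtain ⟨z, hz, hzw⟩ := intermediate_value_Ioo hle (hbc u).continuousOn
      (Set.mem_Ioo.2 ⟨hw1, hw2⟩)
    exact ⟨z, abs_sub_lt_iff.2 ⟨by linarith [hz.2], by linarith [hz.1]⟩, hzw⟩
  · refine ⟨{q : ℝ × ℝ | b q.1 (x + ε) < q.2 ∧ q.2 < b q.1 (x - ε)},
      (isOpen_lt h2 continuous_snd).inter (isOpen_lt continuous_snd h1),
      ⟨hm (by linarith), hm (by linarith)⟩, ?_⟩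
    rintro ⟨u, w⟩ ⟨hw1, hw2⟩
    obtain ⟨z, hz, hzw⟩ := intermediate_value_Ioo' hle (hbc u).continuousOn
      (Set.mem_Ioo.2 ⟨hw1, hw2⟩)
    exact ⟨z, abs_sub_lt_iff.2 ⟨by linarith [hz.2], by linarith [hz.1]⟩, hzw⟩

/-- The common range of a continuous family of injective maps is open, and the family of
inverses is jointly continuous on it. -/
theorem aux_inv_cont {b binv : ℝ → ℝ → ℝ} {S : Set ℝ}
    (hb : Continuous fun q : ℝ × ℝ => b q.1 q.2)
    (hrange : ∀ v₁, Set.range (b v₁) = S)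
    (hl : ∀ v₁ v₂, binv v₁ (b v₁ v₂) = v₂) :
    IsOpen S ∧ ContinuousOn (fun q : ℝ × ℝ => binv q.1 q.2) (Set.univ ×ˢ S) := by
  have hinj : ∀ v₁, Function.Injective (b v₁) := by
    intro v₁ a a' h
    have h' := congrArg (binv v₁) h
    rwa [hl, hl] at h'
  constructor
  · rw [isOpen_iff_mem_nhds]
    intro w hw
    obtain ⟨x, hx⟩ : ∃ x, b 0 x = w := by rw [← hrange 0] at hw; exact hw
    obtain ⟨U, hUo, hUm, hU⟩ := aux_inv_key hb hinj 0 x 1 one_pos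
    rw [hx] at hUm
    have hcont : ContinuousAt (fun w' : ℝ => ((0 : ℝ), w')) w :=
      (continuous_const.prodMk continuous_id).continuousAt
    have hmem : (fun w' : ℝ => ((0 : ℝ), w')) ⁻¹' U ∈ nhds w :=
      hcont.preimage_mem_nhds (hUo.mem_nhds hUm)
    refine Filter.mem_of_superset hmem fun w' hw' => ?_
    obtain ⟨z, _, hz⟩ := hU _ hw'
    rw [← hrange 0]
    exact ⟨z, hz⟩
  · rintro ⟨v₁, w⟩ ⟨-, hw⟩
    apply ContinuousAt.continuousWithinAt
    obtain ⟨x, hx⟩ : ∃ x, b v₁ x = w := by rw [← hrange v₁] at hw; exact hw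
    rw [Metric.continuousAt_iff]
    intro ε hε
    obtain ⟨U, hUo, hUm, hU⟩ := aux_inv_key hb hinj v₁ x ε hε
    rw [hx] at hUm
    obtain ⟨δ, hδ, hball⟩ := Metric.mem_nhds_iff.1 (hUo.mem_nhds hUm)
    refine ⟨δ, hδ, fun {q} hq => ?_⟩
    obtain ⟨z, hzε, hz⟩ := hU q (hball hq)
    have hq2 : binv q.1 q.2 = z := by rw [← hz, hl]
    have hx' : binv v₁ w = x := by rw [← hx, hl]
    simpa [Real.dist_eq, hq2, hx'] using hzε

/-- the key step deriving the violation of the genericity condition.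
`p₂ v₁ v₂` denotes the conditional density `p₂(v₂ | v₁)`, and
`b v₁ v₂ = p̃₂(v₂) / p₂(v₂|v₁)` is a diffeomorphism of ℝ onto the common image `S`
in `v₂` for every `v₁`, with inverse family `binv`. -/
theorem genericity_violation
    (p₁ pt₁ pt₂ : ℝ → ℝ) (p₂ : ℝ → ℝ → ℝ)
    (hp₁ : ∀ x, 0 < p₁ x) (hpt₁ : ∀ x, 0 < pt₁ x) (hpt₂ : ∀ x, 0 < pt₂ x)
    (hp₂ : ∀ x y, 0 < p₂ x y)
    (hp₁C : ContDiff ℝ 1 p₁) (hpt₁C : ContDiff ℝ 1 pt₁) (hpt₂C : ContDiff ℝ 1 pt₂)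
    (hp₂C : ContDiff ℝ 1 fun v : ℝ × ℝ => p₂ v.1 v.2)
    (hp₁int : ∫ x, p₁ x = 1) (hpt₁int : ∫ x, pt₁ x = 1) (hpt₂int : ∫ x, pt₂ x = 1)
    (hp₂int : ∀ v₁, ∫ v₂, p₂ v₁ v₂ = 1)
    (S : Set ℝ)
    (hrange : ∀ v₁, Set.range (fun v₂ => pt₂ v₂ / p₂ v₁ v₂) = S)
    (binv : ℝ → ℝ → ℝ)
    (hbinvC1 : ∀ v₁, ContDiffOn ℝ 1 (binv v₁) S)
    (hbinvl : ∀ v₁ v₂, binv v₁ (pt₂ v₂ / p₂ v₁ v₂) = v₂)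
    (hbinvr : ∀ v₁, ∀ w ∈ S, pt₂ (binv v₁ w) / p₂ v₁ (binv v₁ w) = w)
    (hint : ∀ w₁ ∈ S,
      ∫ v₁, (pt₁ v₁ - p₁ v₁) * p₂ v₁ (binv v₁ w₁) * |deriv (binv v₁) w₁| = 0) :
    ∀ φ : ℝ → ℝ, ContinuousOn φ (Set.Ioi 0) →
      (∫ v : ℝ × ℝ, φ (pt₂ v.2 / p₂ v.1 v.2) * (p₁ v.1 * p₂ v.1 v.2)) =
        ∫ v : ℝ × ℝ, φ (pt₂ v.2 / p₂ v.1 v.2) * (pt₁ v.1 * p₂ v.1 v.2) := by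
  intro φ hφ
  classical
  set b : ℝ → ℝ → ℝ := fun v₁ v₂ => pt₂ v₂ / p₂ v₁ v₂ with hbdef
  have hbcont : Continuous fun q : ℝ × ℝ => b q.1 q.2 :=
    (hpt₂C.continuous.comp continuous_snd).div hp₂C.continuous fun q => (hp₂ q.1 q.2).ne'
  have hbS : ∀ v₁ v₂, b v₁ v₂ ∈ S := fun v₁ v₂ => (hrange v₁) ▸ Set.mem_range_self v₂
  have hSsub : S ⊆ Set.Ioi 0 := by
    intro w hw
    rw [← hrange 0] at hw
    obtain ⟨v₂, hv₂⟩ := hw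
    rw [← hv₂]
    exact div_pos (hpt₂ v₂) (hp₂ 0 v₂)
  obtain ⟨hSopen, hbinvcont⟩ := aux_inv_cont hbcont hrange hbinvl
  have hSmeas : MeasurableSet S := hSopen.measurableSet
  have himg : ∀ v₁, binv v₁ '' S = Set.univ := by
    intro v₁
    ext y
    simp only [Set.mem_univ, iff_true, Set.mem_image]
    exact ⟨b v₁ y, hbS v₁ y, hbinvl v₁ y⟩
  have hinvinj : ∀ v₁, Set.InjOn (binv v₁) S := by
    intro v₁ w hw w' hw' h
    have h2 := congrArg (fun z => pt₂ z / p₂ v₁ z) h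
    simp only [hbinvr v₁ w hw, hbinvr v₁ w' hw'] at h2
    exact h2
  have hdiffinv : ∀ v₁, ∀ w ∈ S, HasDerivAt (binv v₁) (deriv (binv v₁) w) w := fun v₁ w hw =>
    (((hbinvC1 v₁).differentiableOn one_ne_zero).differentiableAt (hSopen.mem_nhds hw)).hasDerivAt
  -- the derivative of `b v₁` and its joint continuity
  set dP : ℝ × ℝ → ℝ := fun q => fderiv ℝ (fun v : ℝ × ℝ => p₂ v.1 v.2) q (0, 1) with hdPdef
  set db : ℝ → ℝ → ℝ := fun v₁ y =>
    (deriv pt₂ y * p₂ v₁ y - pt₂ y * dP (v₁, y)) / p₂ v₁ y ^ 2 with hdbdef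
  have hP2deriv : ∀ v₁ y, HasDerivAt (fun y => p₂ v₁ y) (dP (v₁, y)) y := by
    intro v₁ y
    have h1 : HasFDerivAt (fun v : ℝ × ℝ => p₂ v.1 v.2)
        (fderiv ℝ (fun v : ℝ × ℝ => p₂ v.1 v.2) (v₁, y)) (v₁, y) :=
      (hp₂C.differentiable one_ne_zero (v₁, y)).hasFDerivAt
    have h2 : HasDerivAt (fun t : ℝ => ((v₁, t) : ℝ × ℝ)) (0, 1) y :=
      (hasDerivAt_const y v₁).prodMk (hasDerivAt_id y)
    exact h1.comp_hasDerivAt y h2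
  have hdb : ∀ v₁ y, HasDerivAt (b v₁) (db v₁ y) y := fun v₁ y =>
    ((hpt₂C.differentiable one_ne_zero y).hasDerivAt).div (hP2deriv v₁ y) (hp₂ v₁ y).ne'
  have hdbcont : Continuous fun q : ℝ × ℝ => db q.1 q.2 := by
    have h1 : Continuous dP :=
      (hp₂C.continuous_fderiv one_ne_zero).clm_apply continuous_const
    simp only [hdbdef]
    exact ((((hpt₂C.continuous_deriv le_rfl).comp continuous_snd).mul hp₂C.continuous).sub
      ((hpt₂C.continuous.comp continuous_snd).mul
        (h1.comp (continuous_fst.prodMk continuous_snd)))).div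
      (hp₂C.continuous.pow 2) fun q => pow_ne_zero 2 (hp₂ q.1 q.2).ne'
  have hchain : ∀ v₁, ∀ w ∈ S, db v₁ (binv v₁ w) * deriv (binv v₁) w = 1 := by
    intro v₁ w hw
    have hcomp : HasDerivAt (b v₁ ∘ binv v₁) (db v₁ (binv v₁ w) * deriv (binv v₁) w) w :=
      (hdb v₁ (binv v₁ w)).comp w (hdiffinv v₁ w hw)
    have heq : (id : ℝ → ℝ) =ᶠ[nhds w] b v₁ ∘ binv v₁ := by
      filter_upwards [hSopen.mem_nhds hw] with w' hw'
      exact (hbinvr v₁ w' hw').symm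
    exact (hcomp.congr_of_eventuallyEq heq).unique (hasDerivAt_id w)
  have hdbne : ∀ v₁, ∀ w ∈ S, db v₁ (binv v₁ w) ≠ 0 := by
    intro v₁ w hw h
    have := hchain v₁ w hw
    rw [h, zero_mul] at this
    exact zero_ne_one this
  have hderiv_eq : ∀ v₁, ∀ w ∈ S, deriv (binv v₁) w = (db v₁ (binv v₁ w))⁻¹ := fun v₁ w hw =>
    eq_inv_of_mul_eq_one_right (hchain v₁ w hw)
  -- the pushforward density `g`
  set g : ℝ → ℝ → ℝ := fun v₁ w => p₂ v₁ (binv v₁ w) * |deriv (binv v₁) w| with hgdef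
  have hgnonneg : ∀ v₁ w, 0 ≤ g v₁ w := fun v₁ w =>
    mul_nonneg (hp₂ _ _).le (abs_nonneg _)
  -- change of variables, Bochner version
  have cov : ∀ (v₁ : ℝ) (ψ : ℝ → ℝ),
      (∫ v₂, ψ (b v₁ v₂) * p₂ v₁ v₂) = ∫ w in S, ψ w * g v₁ w := by
    intro v₁ ψ
    have h := integral_image_eq_integral_abs_deriv_smul hSmeas
      (fun w hw => (hdiffinv v₁ w hw).hasDerivWithinAt) (hinvinj v₁)
      (fun y => ψ (b v₁ y) * p₂ v₁ y)
    rw [himg v₁, Measure.restrict_univ] at h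
    rw [h]
    apply setIntegral_congr_fun hSmeas
    intro w hw
    have hb' : b v₁ (binv v₁ w) = w := hbinvr v₁ w hw
    simp only [smul_eq_mul, hb', hgdef]
    ring
  -- change of variables, integrability version
  have covInt : ∀ (v₁ : ℝ) (ψ : ℝ → ℝ),
      Integrable (fun v₂ => ψ (b v₁ v₂) * p₂ v₁ v₂) ↔
        IntegrableOn (fun w => ψ w * g v₁ w) S := by
    intro v₁ ψ
    have h := integrableOn_image_iff_integrableOn_abs_deriv_smul hSmeas
      (fun w hw => (hdiffinv v₁ w hw).hasDerivWithinAt) (hinvinj v₁)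
      (fun y => ψ (b v₁ y) * p₂ v₁ y)
    rw [himg v₁] at h
    rw [← integrableOn_univ, h]
    apply integrableOn_congr_fun _ hSmeas
    intro w hw
    have hb' : b v₁ (binv v₁ w) = w := hbinvr v₁ w hw
    simp only [smul_eq_mul, hb', hgdef]
    ring
  -- integrability of the densities
  have hIp₁ : Integrable p₁ := by
    by_contra h
    exact one_ne_zero (hp₁int.symm.trans (integral_undef h))
  have hIpt₁ : Integrable pt₁ := by
    by_contra h
    exact one_ne_zero (hpt₁int.symm.trans (integral_undef h))
  have hIp₂ : ∀ v₁, Integrable (p₂ v₁) := by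
    intro v₁
    by_contra h
    exact one_ne_zero ((hp₂int v₁).symm.trans (integral_undef h))
  have hg_int : ∀ v₁, IntegrableOn (fun w => g v₁ w) S := by
    intro v₁
    have h := (covInt v₁ fun _ => 1).mp (by simpa using hIp₂ v₁)
    simpa using h
  have hg_norm : ∀ v₁, (∫ w in S, g v₁ w) = 1 := by
    intro v₁
    have h := cov v₁ fun _ => 1
    simpa [hp₂int v₁] using h.symm
  -- joint continuity of `g` on `univ ×ˢ S`
  have hgcont : ContinuousOn (fun q : ℝ × ℝ => g q.1 q.2) (Set.univ ×ˢ S) := by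
    have c1 : ContinuousOn (fun q : ℝ × ℝ => p₂ q.1 (binv q.1 q.2)) (Set.univ ×ˢ S) :=
      hp₂C.continuous.comp_continuousOn (continuous_fst.continuousOn.prodMk hbinvcont)
    have c2 : ContinuousOn (fun q : ℝ × ℝ => db q.1 (binv q.1 q.2)) (Set.univ ×ˢ S) :=
      hdbcont.comp_continuousOn (continuous_fst.continuousOn.prodMk hbinvcont)
    have c3 : ContinuousOn
        (fun q : ℝ × ℝ => p₂ q.1 (binv q.1 q.2) * |db q.1 (binv q.1 q.2)|⁻¹)
        (Set.univ ×ˢ S) :=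
      c1.mul (c2.abs.inv₀ fun q hq => abs_ne_zero.2 (hdbne q.1 q.2 hq.2))
    apply c3.congr
    intro q hq
    simp only [hgdef, hderiv_eq q.1 q.2 hq.2, abs_inv]
  have hmeasSet : MeasurableSet (Set.univ ×ˢ S : Set (ℝ × ℝ)) := MeasurableSet.univ.prod hSmeas
  have hν : (volume : Measure ℝ).prod (volume.restrict S) =
      (volume : Measure (ℝ × ℝ)).restrict (Set.univ ×ˢ S) := by
    rw [Measure.volume_eq_prod, ← Measure.prod_restrict, Measure.restrict_univ]
  have hAESM' : ∀ ρ : ℝ → ℝ, Continuous ρ → AEStronglyMeasurable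
      (fun q : ℝ × ℝ => ρ q.1 * g q.1 q.2) ((volume : Measure ℝ).prod (volume.restrict S)) := by
    intro ρ hρ
    rw [hν]
    exact ContinuousOn.aestronglyMeasurable
      ((hρ.comp continuous_fst).continuousOn.mul hgcont) hmeasSet
  have hAESM : ∀ ρ : ℝ → ℝ, Continuous ρ → AEStronglyMeasurable
      (fun q : ℝ × ℝ => φ q.2 * (ρ q.1 * g q.1 q.2))
      ((volume : Measure ℝ).prod (volume.restrict S)) := by
    intro ρ hρ
    rw [hν]
    apply ContinuousOn.aestronglyMeasurable _ hmeasSet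
    exact (hφ.comp continuous_snd.continuousOn fun q hq => hSsub hq.2).mul
      ((hρ.comp continuous_fst).continuousOn.mul hgcont)
  -- integrability of `ρ q.1 * g q.1 q.2` on the product
  have hGint : ∀ ρ : ℝ → ℝ, Continuous ρ → (∀ x, 0 < ρ x) → Integrable ρ →
      Integrable (fun q : ℝ × ℝ => ρ q.1 * g q.1 q.2)
        ((volume : Measure ℝ).prod (volume.restrict S)) := by
    intro ρ hρC hρpos hρI
    rw [integrable_prod_iff (hAESM' ρ hρC)]
    constructor
    · exact ae_of_all _ fun v₁ => (hg_int v₁).const_mul (ρ v₁)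
    · apply hρI.congr
      apply ae_of_all
      intro v₁
      show ρ v₁ = ∫ w in S, ‖ρ v₁ * g v₁ w‖
      have e1 : (fun w => ‖ρ v₁ * g v₁ w‖) = fun w => ρ v₁ * g v₁ w := by
        funext w
        rw [Real.norm_eq_abs, abs_of_nonneg (mul_nonneg (hρpos v₁).le (hgnonneg v₁ w))]
      rw [e1, integral_const_mul, hg_norm v₁, mul_one]
  have haeInt : ∀ ρ : ℝ → ℝ, Continuous ρ → (∀ x, 0 < ρ x) → Integrable ρ →
      ∀ᵐ w ∂(volume.restrict S), Integrable (fun v₁ => ρ v₁ * g v₁ w) :=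
    fun ρ h1 h2 h3 => (hGint ρ h1 h2 h3).prod_left_ae
  -- the key a.e. identity coming from `hint`
  have haeq : ∀ᵐ w ∂(volume.restrict S),
      (∫ v₁, p₁ v₁ * g v₁ w) = ∫ v₁, pt₁ v₁ * g v₁ w := by
    filter_upwards [haeInt p₁ hp₁C.continuous hp₁ hIp₁, haeInt pt₁ hpt₁C.continuous hpt₁ hIpt₁,
      ae_restrict_mem hSmeas] with w h1 h2 hwS
    have h0 := hint w hwS
    have e : (fun v₁ => (pt₁ v₁ - p₁ v₁) * p₂ v₁ (binv v₁ w) * |deriv (binv v₁) w|) =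
        fun v₁ => pt₁ v₁ * g v₁ w - p₁ v₁ * g v₁ w := by
      funext v₁
      simp only [hgdef]
      ring
    rw [e, integral_sub h2 h1, sub_eq_zero] at h0
    exact h0.symm
  -- slicewise transfer between `F_ρ` and `H_ρ`
  have hslice_iff : ∀ (ρ : ℝ → ℝ) (v₁ : ℝ),
      Integrable (fun v₂ => φ (b v₁ v₂) * (ρ v₁ * p₂ v₁ v₂)) ↔
        Integrable (fun w => φ w * (ρ v₁ * g v₁ w)) (volume.restrict S) := by
    intro ρ v₁
    have e1 : (fun v₂ => φ (b v₁ v₂) * (ρ v₁ * p₂ v₁ v₂)) =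
        fun v₂ => (φ (b v₁ v₂) * ρ v₁) * p₂ v₁ v₂ := by funext v₂; ring
    have e2 : (fun w => φ w * (ρ v₁ * g v₁ w)) = fun w => (φ w * ρ v₁) * g v₁ w := by
      funext w; ring
    rw [e1, e2]
    exact covInt v₁ fun w => φ w * ρ v₁
  have hslice_eq : ∀ (ρ : ℝ → ℝ) (v₁ : ℝ),
      (∫ v₂, φ (b v₁ v₂) * (ρ v₁ * p₂ v₁ v₂)) = ∫ w in S, φ w * (ρ v₁ * g v₁ w) := by
    intro ρ v₁
    have e1 : (fun v₂ => φ (b v₁ v₂) * (ρ v₁ * p₂ v₁ v₂)) =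
        fun v₂ => (φ (b v₁ v₂) * ρ v₁) * p₂ v₁ v₂ := by funext v₂; ring
    have e2 : (fun w => φ w * (ρ v₁ * g v₁ w)) = fun w => (φ w * ρ v₁) * g v₁ w := by
      funext w; ring
    rw [e1, e2]
    exact cov v₁ fun w => φ w * ρ v₁
  have hslice_norm : ∀ (ρ : ℝ → ℝ), (∀ x, 0 < ρ x) → ∀ v₁ : ℝ,
      (∫ v₂, ‖φ (b v₁ v₂) * (ρ v₁ * p₂ v₁ v₂)‖) = ∫ w in S, ‖φ w * (ρ v₁ * g v₁ w)‖ := by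
    intro ρ hρpos v₁
    have e1 : (fun v₂ => ‖φ (b v₁ v₂) * (ρ v₁ * p₂ v₁ v₂)‖) =
        fun v₂ => (|φ (b v₁ v₂)| * ρ v₁) * p₂ v₁ v₂ := by
      funext v₂
      rw [Real.norm_eq_abs, abs_mul, abs_mul, abs_of_pos (hρpos v₁), abs_of_pos (hp₂ v₁ v₂)]
      ring
    have e2 : (fun w => ‖φ w * (ρ v₁ * g v₁ w)‖) = fun w => (|φ w| * ρ v₁) * g v₁ w := by
      funext w
      rw [Real.norm_eq_abs, abs_mul, abs_mul, abs_of_pos (hρpos v₁),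
        abs_of_nonneg (hgnonneg v₁ w)]
      ring
    rw [e1, e2]
    exact cov v₁ fun w => |φ w| * ρ v₁
  -- integrability transfer between the plane and `ℝ ×ˢ S`
  have hFH : ∀ ρ : ℝ → ℝ, Continuous ρ → (∀ x, 0 < ρ x) →
      (Integrable (fun v : ℝ × ℝ => φ (b v.1 v.2) * (ρ v.1 * p₂ v.1 v.2))
          ((volume : Measure ℝ).prod volume) ↔
        Integrable (fun q : ℝ × ℝ => φ q.2 * (ρ q.1 * g q.1 q.2))
          ((volume : Measure ℝ).prod (volume.restrict S))) := by
    intro ρ hρC hρpos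
    have hFm : AEStronglyMeasurable (fun v : ℝ × ℝ => φ (b v.1 v.2) * (ρ v.1 * p₂ v.1 v.2))
        ((volume : Measure ℝ).prod volume) :=
      Continuous.aestronglyMeasurable
        ((hφ.comp_continuous hbcont fun q => hSsub (hbS q.1 q.2)).mul
          ((hρC.comp continuous_fst).mul hp₂C.continuous))
    rw [integrable_prod_iff hFm, integrable_prod_iff (hAESM ρ hρC)]
    constructor
    · rintro ⟨h1, h2⟩
      constructor
      · filter_upwards [h1] with v₁ h
        exact (hslice_iff ρ v₁).mp h
      · exact h2.congr (ae_of_all _ fun v₁ => hslice_norm ρ hρpos v₁)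
    · rintro ⟨h1, h2⟩
      constructor
      · filter_upwards [h1] with v₁ h
        exact (hslice_iff ρ v₁).mpr h
      · exact h2.congr (ae_of_all _ fun v₁ => (hslice_norm ρ hρpos v₁).symm)
  -- integrability transfer between `H₁` and `H₂`
  have hs1 : ∀ᵐ w ∂(volume.restrict S),
      Integrable (fun v₁ => φ w * (p₁ v₁ * g v₁ w)) := by
    filter_upwards [haeInt p₁ hp₁C.continuous hp₁ hIp₁] with w h
    exact h.const_mul (φ w)
  have hs2 : ∀ᵐ w ∂(volume.restrict S),
      Integrable (fun v₁ => φ w * (pt₁ v₁ * g v₁ w)) := by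
    filter_upwards [haeInt pt₁ hpt₁C.continuous hpt₁ hIpt₁] with w h
    exact h.const_mul (φ w)
  have hnorm_ae : (fun w => ∫ v₁, ‖φ w * (p₁ v₁ * g v₁ w)‖) =ᵐ[volume.restrict S]
      fun w => ∫ v₁, ‖φ w * (pt₁ v₁ * g v₁ w)‖ := by
    filter_upwards [haeq] with w he
    have e1 : (fun v₁ => ‖φ w * (p₁ v₁ * g v₁ w)‖) =
        fun v₁ => |φ w| * (p₁ v₁ * g v₁ w) := by
      funext v₁
      rw [Real.norm_eq_abs, abs_mul, abs_of_nonneg (mul_nonneg (hp₁ v₁).le (hgnonneg v₁ w))]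
    have e2 : (fun v₁ => ‖φ w * (pt₁ v₁ * g v₁ w)‖) =
        fun v₁ => |φ w| * (pt₁ v₁ * g v₁ w) := by
      funext v₁
      rw [Real.norm_eq_abs, abs_mul, abs_of_nonneg (mul_nonneg (hpt₁ v₁).le (hgnonneg v₁ w))]
    rw [e1, e2, integral_const_mul, integral_const_mul, he]
  have hHH : Integrable (fun q : ℝ × ℝ => φ q.2 * (p₁ q.1 * g q.1 q.2))
        ((volume : Measure ℝ).prod (volume.restrict S)) ↔
      Integrable (fun q : ℝ × ℝ => φ q.2 * (pt₁ q.1 * g q.1 q.2))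
        ((volume : Measure ℝ).prod (volume.restrict S)) := by
    rw [integrable_prod_iff' (hAESM p₁ hp₁C.continuous),
      integrable_prod_iff' (hAESM pt₁ hpt₁C.continuous)]
    constructor
    · rintro ⟨-, h2⟩
      exact ⟨hs2, h2.congr hnorm_ae⟩
    · rintro ⟨-, h2⟩
      exact ⟨hs1, h2.congr hnorm_ae.symm⟩
  -- assemble
  show (∫ v : ℝ × ℝ, φ (b v.1 v.2) * (p₁ v.1 * p₂ v.1 v.2)) =
    ∫ v : ℝ × ℝ, φ (b v.1 v.2) * (pt₁ v.1 * p₂ v.1 v.2)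
  by_cases hF₁ : Integrable (fun v : ℝ × ℝ => φ (b v.1 v.2) * (p₁ v.1 * p₂ v.1 v.2))
    ((volume : Measure ℝ).prod volume)
  · have hH₁ : Integrable (fun q : ℝ × ℝ => φ q.2 * (p₁ q.1 * g q.1 q.2))
        ((volume : Measure ℝ).prod (volume.restrict S)) :=
      (hFH p₁ hp₁C.continuous hp₁).mp hF₁
    have hH₂ : Integrable (fun q : ℝ × ℝ => φ q.2 * (pt₁ q.1 * g q.1 q.2))
        ((volume : Measure ℝ).prod (volume.restrict S)) := hHH.mp hH₁
    have hF₂ : Integrable (fun v : ℝ × ℝ => φ (b v.1 v.2) * (pt₁ v.1 * p₂ v.1 v.2))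
        ((volume : Measure ℝ).prod volume) :=
      (hFH pt₁ hpt₁C.continuous hpt₁).mpr hH₂
    calc (∫ v : ℝ × ℝ, φ (b v.1 v.2) * (p₁ v.1 * p₂ v.1 v.2))
        = ∫ v₁, ∫ v₂, φ (b v₁ v₂) * (p₁ v₁ * p₂ v₁ v₂) := integral_prod _ hF₁
      _ = ∫ v₁, ∫ w in S, φ w * (p₁ v₁ * g v₁ w) :=
          integral_congr_ae (ae_of_all _ fun v₁ => hslice_eq p₁ v₁)
      _ = ∫ w in S, ∫ v₁, φ w * (p₁ v₁ * g v₁ w) := by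
          rw [← integral_prod _ hH₁, integral_prod_symm _ hH₁]
      _ = ∫ w in S, ∫ v₁, φ w * (pt₁ v₁ * g v₁ w) := by
          apply integral_congr_ae
          filter_upwards [haeq] with w he
          rw [integral_const_mul, integral_const_mul, he]
      _ = ∫ v₁, ∫ w in S, φ w * (pt₁ v₁ * g v₁ w) := by
          rw [← integral_prod_symm _ hH₂, integral_prod _ hH₂]
      _ = ∫ v₁, ∫ v₂, φ (b v₁ v₂) * (pt₁ v₁ * p₂ v₁ v₂) :=
          integral_congr_ae (ae_of_all _ fun v₁ => (hslice_eq pt₁ v₁).symm)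
      _ = ∫ v : ℝ × ℝ, φ (b v.1 v.2) * (pt₁ v.1 * p₂ v.1 v.2) := (integral_prod _ hF₂).symm
  · have hF₂ : ¬ Integrable (fun v : ℝ × ℝ => φ (b v.1 v.2) * (pt₁ v.1 * p₂ v.1 v.2))
        ((volume : Measure ℝ).prod volume) := fun h =>
      hF₁ ((hFH p₁ hp₁C.continuous hp₁).mpr (hHH.mpr ((hFH pt₁ hpt₁C.continuous hpt₁).mp h)))
    rw [show (volume : Measure (ℝ × ℝ)) = (volume : Measure ℝ).prod volume from rfl,
      integral_undef hF₁, integral_undef hF₂]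
end
end

section
/- Let ψ : ℝⁿ → ℝⁿ be a diffeomorphism, and fix an index i. Suppose there are two pairs of fully supported continuously differentiable densities (p̃_i, p̂_i) and (p̋_i, p̌_i) on ℝ with (p̂_i/p̃_i)'(v) ≠ 0 and (p̌_i/p̋_i)'(v) ≠ 0 for all v, and indices j ≠ k such that for all z ∈ ℝⁿ: the ratio (p̂_i/p̃_i)(ψ_i(z)) is a function of z_j alone and (p̌_i/p̋_i)(ψ_i(z)) is a function of z_k alone. Then ∂ψ_i/∂z_l = 0 for every l, contradicting invertibility of ψ. Hence no such configuration of two pairs of interventions on the same variable with distinct inferred targets can exist. -/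
open MeasureTheory

noncomputable section

/-- A continuous real function whose derivative never vanishes is injective. -/
lemma injective_of_deriv_ne_zero {f : ℝ → ℝ} (hc : Continuous f)
    (hd : ∀ v, deriv f v ≠ 0) : Function.Injective f := by
  intro a b hab
  by_contra hne
  wlog h : a < b generalizing a b
  · exact this hab.symm (fun h => hne h.symm) ((Ne.lt_or_gt hne).resolve_left h)
  obtain ⟨c, _, hc0⟩ := exists_deriv_eq_zero h (hc.continuousOn) hab
  exact hd c hc0

/-- two pairs of interventions on the same variable `V_i` whose
density ratios have nowhere-vanishing derivatives cannot correspond to two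
distinct inferred targets `z_j` and `z_k` (`j ≠ k`), since this would force the
gradient of `ψ_i` to vanish everywhere, contradicting invertibility of `ψ`. -/
theorem two_pairs_distinct_targets_impossible
    (n : ℕ) (ψ : (Fin n → ℝ) → (Fin n → ℝ)) (hψ : IsDiffeo ψ)
    (i j k : Fin n) (hjk : j ≠ k)
    (pt ph pb pc : ℝ → ℝ)
    (hptC : ContDiff ℝ 1 pt) (hphC : ContDiff ℝ 1 ph)
    (hpbC : ContDiff ℝ 1 pb) (hpcC : ContDiff ℝ 1 pc)
    (hptpos : ∀ x, 0 < pt x) (hphpos : ∀ x, 0 < ph x)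
    (hpbpos : ∀ x, 0 < pb x) (hpcpos : ∀ x, 0 < pc x)
    (hptint : ∫ x, pt x = 1) (hphint : ∫ x, ph x = 1)
    (hpbint : ∫ x, pb x = 1) (hpcint : ∫ x, pc x = 1)
    (hratio₁ : ∀ v : ℝ, deriv (fun t => ph t / pt t) v ≠ 0)
    (hratio₂ : ∀ v : ℝ, deriv (fun t => pc t / pb t) v ≠ 0)
    (hzj : ∃ g : ℝ → ℝ, ∀ z : Fin n → ℝ, ph (ψ z i) / pt (ψ z i) = g (z j))
    (hzk : ∃ g : ℝ → ℝ, ∀ z : Fin n → ℝ, pc (ψ z i) / pb (ψ z i) = g (z k)) :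
    False := by
  obtain ⟨ginv, hli, hri, hfC, hgC⟩ := hψ
  obtain ⟨g₁, hg₁⟩ := hzj
  obtain ⟨g₂, hg₂⟩ := hzk
  have hr₁ : Function.Injective (fun t => ph t / pt t) :=
    injective_of_deriv_ne_zero
      (hphC.continuous.div hptC.continuous fun x => (hptpos x).ne') hratio₁
  have hr₂ : Function.Injective (fun t => pc t / pb t) :=
    injective_of_deriv_ne_zero
      (hpcC.continuous.div hpbC.continuous fun x => (hpbpos x).ne') hratio₂
  -- ψ z i depends only on z j, and only on z k
  have hdepj : ∀ z z' : Fin n → ℝ, z j = z' j → ψ z i = ψ z' i := by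
    intro z z' h
    apply hr₁
    simp only
    rw [hg₁ z, hg₁ z', h]
  have hdepk : ∀ z z' : Fin n → ℝ, z k = z' k → ψ z i = ψ z' i := by
    intro z z' h
    apply hr₂
    simp only
    rw [hg₂ z, hg₂ z', h]
  -- hence ψ z i is constant
  have hconst : ∀ z z' : Fin n → ℝ, ψ z i = ψ z' i := by
    intro z z'
    have h1 : ψ z i = ψ (Function.update z j (z' j)) i :=
      hdepk z _ (by rw [Function.update_of_ne (Ne.symm hjk)])
    have h2 : ψ (Function.update z j (z' j)) i = ψ z' i :=
      hdepj _ z' (by rw [Function.update_self])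
    exact h1.trans h2
  -- contradiction with surjectivity of ψ
  set c := ψ 0 i with hc
  have h1 : ψ (ginv (fun _ => c + 1)) i = c + 1 := by rw [hri (fun _ => c + 1)]
  have h2 : ψ (ginv (fun _ => c + 1)) i = c := hconst _ 0
  rw [h2] at h1
  linarith
end
end

section
/- Consider two continu13ously differentiable, strictly positive densities q^{e₀} and q^{e₁} on ℝⁿ related to densities p^{e₀} and p^{e₁} via the same diffeomorphism ψ : ℝⁿ → ℝⁿ by the change-of-variables formula q^{e}(z) = p^{e}(ψ(z)) |det J_ψ(z)| for e ∈ {e₀, e₁}. Suppose p^{e₁}(v) / p^{e₀}(v) = p̃₁(v₁)/p₁(v₁) depends only on v₁ and q^{e₁}(z)/q^{e₀}(z) = q̃₁(z₁)/q₁(z₁) depends only on z₁. Then (p̃₁/p₁)(ψ₁(z)) = (q̃₁/q₁)(z₁) for all z; if additionally (p̃₁/p₁)'(v₁) ≠ 0 for all v₁, then ψ₁ depends only on z₁. -/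
open MeasureTheory

noncomputable section

/-- two environments related by the same diffeomorphism `ψ` via the
change-of-variables formula, where the density ratio depends only on the first
variable on both sides, yield `(p̃₁/p₁)(ψ₁(z)) = (q̃₁/q₁)(z₁)`; if additionally
`(p̃₁/p₁)'` never vanishes, `ψ₁` depends only on `z₁`. -/
theorem ratio_invariance_and_triangularity
    (n : ℕ) [NeZero n]
    (ψ : (Fin n → ℝ) → (Fin n → ℝ)) (hψ : IsDiffeo ψ)
    (pe₀ pe₁ qe₀ qe₁ : (Fin n → ℝ) → ℝ)
    (hpe₀ : ∀ v, 0 < pe₀ v) (hpe₁ : ∀ v, 0 < pe₁ v)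
    (hqe₀ : ∀ z, 0 < qe₀ z) (hqe₁ : ∀ z, 0 < qe₁ z)
    (hpe₀C : ContDiff ℝ 1 pe₀) (hpe₁C : ContDiff ℝ 1 pe₁)
    (hqe₀C : ContDiff ℝ 1 qe₀) (hqe₁C : ContDiff ℝ 1 qe₁)
    (hcov₀ : ∀ z, qe₀ z = pe₀ (ψ z) * |LinearMap.det (fderiv ℝ ψ z).toLinearMap|)
    (hcov₁ : ∀ z, qe₁ z = pe₁ (ψ z) * |LinearMap.det (fderiv ℝ ψ z).toLinearMap|)
    (p₁ pt₁ q₁ qt₁ : ℝ → ℝ)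
    (hp₁ : ∀ x, 0 < p₁ x) (hpt₁ : ∀ x, 0 < pt₁ x)
    (hq₁ : ∀ x, 0 < q₁ x) (hqt₁ : ∀ x, 0 < qt₁ x)
    (hp₁C : ContDiff ℝ 1 p₁) (hpt₁C : ContDiff ℝ 1 pt₁)
    (hpr : ∀ v : Fin n → ℝ, pe₁ v / pe₀ v = pt₁ (v 0) / p₁ (v 0))
    (hqr : ∀ z : Fin n → ℝ, qe₁ z / qe₀ z = qt₁ (z 0) / q₁ (z 0)) :
    (∀ z : Fin n → ℝ, pt₁ (ψ z 0) / p₁ (ψ z 0) = qt₁ (z 0) / q₁ (z 0)) ∧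
    ((∀ v₁ : ℝ, deriv (fun t => pt₁ t / p₁ t) v₁ ≠ 0) →
      ∀ (z : Fin n → ℝ) (j : Fin n), j ≠ 0 →
        deriv (fun t => ψ (Function.update z j t) 0) (z j) = 0) := by
  have key : ∀ z : Fin n → ℝ, pt₁ (ψ z 0) / p₁ (ψ z 0) = qt₁ (z 0) / q₁ (z 0) := by
    intro z
    have hd : |LinearMap.det (fderiv ℝ ψ z).toLinearMap| ≠ 0 := by
      intro h
      have := hcov₀ z
      rw [h, mul_zero] at this
      exact (hqe₀ z).ne' this
    have h1 : qe₁ z / qe₀ z = pe₁ (ψ z) / pe₀ (ψ z) := by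
      rw [hcov₀, hcov₁, mul_div_mul_right _ _ hd]
    rw [← hpr (ψ z), ← h1, hqr z]
  refine ⟨key, fun hder z j hj => ?_⟩
  set r : ℝ → ℝ := fun t => pt₁ t / p₁ t with hr
  set f : ℝ → ℝ := fun t => ψ (Function.update z j t) 0 with hf
  have hψd : Differentiable ℝ ψ := hψ.choose_spec.2.2.1.differentiable one_ne_zero
  have hfd : DifferentiableAt ℝ f (z j) := by
    have h1 : DifferentiableAt ℝ (Function.update z j) (z j) :=
      (hasDerivAt_update z j (z j)).differentiableAt
    have h3 := (hψd (Function.update z j (z j))).comp (z j) h1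
    exact (differentiableAt_pi.mp h3) 0
  have hrd : DifferentiableAt ℝ r (f (z j)) :=
    ((hpt₁C.differentiable one_ne_zero).differentiableAt).div
      ((hp₁C.differentiable one_ne_zero).differentiableAt) (hp₁ _).ne'
  have hconst : (r ∘ f) = fun _ : ℝ => qt₁ (z 0) / q₁ (z 0) := by
    funext t
    have h4 := key (Function.update z j t)
    simpa [r, f, Function.comp, Function.update_of_ne (Ne.symm hj)] using h4
  have hcomp := deriv_comp (z j) hrd hfd
  rw [hconst, deriv_const] at hcomp
  rcases mul_eq_zero.mp hcomp.symm with h | h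
  · exact absurd h (hder _)
  · exact h
end
end

section
/- Let p(v) = ∏_i p_i(v_i | v_{pa(i)}) be Markovian w.r.t. a DAG G, let π : G → G' be a graph isomorphism, φ an element-wise diffeomorphism with inverse ψ, and Z = P_{π⁻¹} ∘ φ(V) with density q Markovian w.r.t. G'. For an intervention replacing the mechanisms {p_i(v_i | v_{pa(i)})}_{i ∈ I} by {p̃_i(v_i | v_{pa(i)})}_{i ∈ I} for a target set I ⊆ [n], define q̃_{π(i)}(z_{π(i)} | z_{pa(π(i); G')}) := p̃_i(ψ_i(z_{π(i)}) | ψ_{pa(i)}(z_{pa(π(i); G')})) · |dψ_i/dz_{π(i)}(z_{π(i)})| for i ∈ I. Then the intervened density p^e with p^e(v) = ∏_{i∈I} p̃_i(v_i|v_{pa(i)}) ∏_{j∉I} p_j(v_j|v_{pa(j)}) pushes forward under P_{π⁻¹} ∘ φ to the density q^e(z) = ∏_{i∈I} q̃_{π(i)}(z_{π(i)} | z_{pa(π(i);G')}) ∏_{j∉I} q_{π(j)}(z_{π(j)} | z_{pa(π(j);G')}). In particular, any intervention on V_I in G corresponds to an equally sparse intervention on Z_{π(I)} in G' inducing the same pushforward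 distribution on observations. -/
open MeasureTheory

noncomputable section

lemma abs_det_pi_smul_proj {n : ℕ} (π : Equiv.Perm (Fin n)) (d : Fin n → ℝ) :
    |(ContinuousLinearMap.pi (fun k =>
        d k • (ContinuousLinearMap.proj (π k) : (Fin n → ℝ) →L[ℝ] ℝ))).det|
      = ∏ k, |d k| := by
  have hmat : LinearMap.toMatrix' ((ContinuousLinearMap.pi (fun k =>
        d k • (ContinuousLinearMap.proj (π k) : (Fin n → ℝ) →L[ℝ] ℝ))) :
        (Fin n → ℝ) →ₗ[ℝ] (Fin n → ℝ)) = Matrix.diagonal d * π.permMatrix ℝ := by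
    ext k j
    simp [LinearMap.toMatrix'_apply, Matrix.mul_apply, Matrix.diagonal_apply,
      PEquiv.toMatrix_apply, Equiv.toPEquiv_apply, Finset.mul_sum, eq_comm,
      mul_ite]
    rw [Finset.sum_eq_single k]
    · rw [Pi.single_apply]; split_ifs <;> simp_all
    · intro x _ hx
      simp [Ne.symm hx]
    · simp
  have : (ContinuousLinearMap.pi (fun k =>
        d k • (ContinuousLinearMap.proj (π k) : (Fin n → ℝ) →L[ℝ] ℝ))).det
      = (Matrix.diagonal d * π.permMatrix ℝ).det := by
    rw [ContinuousLinearMap.det, ← LinearMap.det_toMatrix', hmat]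
  rw [this, Matrix.det_mul, Matrix.det_diagonal, Matrix.det_permutation, abs_mul,
    Finset.abs_prod]
  rcases Int.units_eq_one_or (Equiv.Perm.sign π) with h | h <;> simp [h]

/-- minimality of `∼_CRL`: an intervention replacing the mechanisms
`{pᵢ}_{i ∈ I}` by `{p̃ᵢ}_{i ∈ I}` pushes forward, under `Z = P_{π⁻¹} ∘ φ (V)`
(with `π : G ≃ G'` a graph isomorphism, `φ` element-wise with inverses `ψᵢ`), to
the equally sparse intervention on `Z_{π(I)}` with mechanisms
`q̃_{π(i)}(z_{π(i)} | z_pa(π(i);G')) = p̃ᵢ(ψᵢ(z_{π(i)}) | ψ_pa(i)(z_pa)) |ψᵢ'(z_{π(i)})|`,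
inducing the same observed distribution. -/
theorem intervention_pushforward_equally_sparse
    (n : ℕ) (E E' : Fin n → Fin n → Prop)
    (hacyc : ∀ i, ¬ Relation.TransGen E i i)
    (mech tmech : Fin n → ℝ → (Fin n → ℝ) → ℝ)
    (hmechPa : ∀ i x v v', (∀ k, E k i → v k = v' k) → mech i x v = mech i x v')
    (htmechPa : ∀ i x v v', (∀ k, E k i → v k = v' k) → tmech i x v = tmech i x v')
    (hmechPos : ∀ i x v, 0 < mech i x v) (htmechPos : ∀ i x v, 0 < tmech i x v)
    (hmechC1 : ∀ i v, ContDiff ℝ 1 fun x => mech i x v)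
    (htmechC1 : ∀ i v, ContDiff ℝ 1 fun x => tmech i x v)
    (hmechInt : ∀ i v, ∫ x : ℝ, mech i x v = 1)
    (htmechInt : ∀ i v, ∫ x : ℝ, tmech i x v = 1)
    (π : Equiv.Perm (Fin n))
    (hiso : ∀ i j, E i j ↔ E' (π i) (π j))
    (φ ψ : Fin n → ℝ → ℝ)
    (hφ : ∀ i, IsDiffeo (φ i))
    (hψl : ∀ i, Function.LeftInverse (ψ i) (φ i))
    (hψr : ∀ i, Function.RightInverse (ψ i) (φ i))
    (I : Finset (Fin n)) :
    Measure.map (fun v : Fin n → ℝ => fun j => φ (π.symm j) (v (π.symm j)))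
        (volume.withDensity fun v : Fin n → ℝ => ENNReal.ofReal
          (∏ i, (if i ∈ I then tmech i else mech i) (v i) v))
      = volume.withDensity fun z : Fin n → ℝ => ENNReal.ofReal
          (∏ j, (if π.symm j ∈ I
              then tmech (π.symm j) (ψ (π.symm j) (z j)) (fun k => ψ k (z (π k)))
              else mech (π.symm j) (ψ (π.symm j) (z j)) (fun k => ψ k (z (π k)))) *
            |deriv (ψ (π.symm j)) (z j)|) := by
  classical
  set f : (Fin n → ℝ) → ℝ :=
    fun v => ∏ i, (if i ∈ I then tmech i else mech i) (v i) v with hfdef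
  set T : (Fin n → ℝ) → (Fin n → ℝ) := fun v j => φ (π.symm j) (v (π.symm j)) with hTdef
  set S : (Fin n → ℝ) → (Fin n → ℝ) := fun z k => ψ k (z (π k)) with hSdef
  have hψc : ∀ i, ContDiff ℝ 1 (ψ i) := by
    intro i
    obtain ⟨g, hgl, hgr, hφc, hgc⟩ := hφ i
    have hgψ : ψ i = g := by
      funext x
      have h1 : g (φ i (ψ i x)) = ψ i x := hgl _
      rw [hψr i x] at h1
      exact h1.symm
    rw [hgψ]; exact hgc
  have hφc : ∀ i, ContDiff ℝ 1 (φ i) := fun i => (hφ i).choose_spec.2.2.1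
  have hTmeas : Measurable T := by
    apply measurable_pi_lambda
    exact fun j => ((hφc (π.symm j)).continuous.measurable).comp (measurable_pi_apply _)
  have hTS : ∀ z, T (S z) = z := by
    intro z; funext j
    simp only [hTdef, hSdef, Equiv.apply_symm_apply]
    exact hψr (π.symm j) (z j)
  have hST : ∀ v, S (T v) = v := by
    intro v; funext k
    simp only [hTdef, hSdef, Equiv.symm_apply_apply]
    exact hψl k (v k)
  set A : (Fin n → ℝ) → ((Fin n → ℝ) →L[ℝ] (Fin n → ℝ)) := fun z =>
    ContinuousLinearMap.pi fun k => (deriv (ψ k) (z (π k))) •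
      (ContinuousLinearMap.proj (π k) : (Fin n → ℝ) →L[ℝ] ℝ) with hAdef
  have hSd : ∀ z, HasFDerivAt S (A z) z := by
    intro z
    apply hasFDerivAt_pi.2
    intro k
    have h1 : HasDerivAt (ψ k) (deriv (ψ k) (z (π k))) (z (π k)) :=
      ((hψc k).differentiable one_ne_zero (z (π k))).hasDerivAt
    exact h1.comp_hasFDerivAt z (hasFDerivAt_apply (π k) z)
  have hSinj : Function.Injective S := Function.LeftInverse.injective hTS
  ext s hs
  rw [Measure.map_apply hTmeas hs, withDensity_apply _ (hTmeas hs),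
    withDensity_apply _ hs]
  have hpre : T ⁻¹' s = S '' s := by
    ext x
    constructor
    · intro hx; exact ⟨T x, hx, hST x⟩
    · rintro ⟨z, hz, rfl⟩
      simpa [Set.mem_preimage, hTS z] using hz
  rw [hpre, lintegral_image_eq_lintegral_abs_det_fderiv_mul volume hs
    (fun z _ => (hSd z).hasFDerivWithinAt) hSinj.injOn]
  refine lintegral_congr fun z => ?_
  have hdet : |(A z).det| = ∏ j, |deriv (ψ (π.symm j)) (z j)| := by
    rw [hAdef, abs_det_pi_smul_proj π (fun k => deriv (ψ k) (z (π k)))]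
    rw [← Equiv.prod_comp π (fun j => |deriv (ψ (π.symm j)) (z j)|)]
    simp
  have hfS : f (S z) = ∏ j, (if π.symm j ∈ I
      then tmech (π.symm j) (ψ (π.symm j) (z j)) (fun k => ψ k (z (π k)))
      else mech (π.symm j) (ψ (π.symm j) (z j)) (fun k => ψ k (z (π k)))) := by
    show (∏ i, (if i ∈ I then tmech i else mech i) (S z i) (S z)) = _
    rw [← Equiv.prod_comp π.symm
      (fun i => (if i ∈ I then tmech i else mech i) (S z i) (S z))]
    refine Finset.prod_congr rfl fun j _ => ?_
    have hSz : S z (π.symm j) = ψ (π.symm j) (z j) := by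
      simp [hSdef]
    rw [hSz]
    by_cases hj : π.symm j ∈ I <;> simp [hj, hSdef]
  have habs : (0:ℝ) ≤ ∏ j, |deriv (ψ (π.symm j)) (z j)| :=
    Finset.prod_nonneg fun j _ => abs_nonneg _
  rw [Finset.prod_mul_distrib, ← hfS, ← hdet, mul_comm (f (S z)),
    ENNReal.ofReal_mul (abs_nonneg _)]
end
end
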